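/- arXiv:2411.14819 — 11 statements merged into one kernel-verified Lean document; each statement's English description precedes it below -/
import Mathlib

section
/- For every u ∈ V one has B(u, u + N u) ≥ m(u,u) + (1/2)·(A(u,u) + A(N u, N u)). (This is the key coercivity step in the proof of the first inf-sup stability theorem, Theorem 3.4 of the paper.) -/
/-- Abstract coercivity step in the proof of the first inf-sup stability estimate
(Theorem 3.4): `B(u, u + N u) ≥ m(u,u) + (1/2)·(A(u,u) + A(N u, N u))`, where
`B(u,v) = m(u,v) + A(u,v)`, `A` is a symmetric positive semidefinite bilinear form,
`m` is a bilinear form with nonnegative diagonal, and `N` is the discrete Newton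
potential, characterized by `A(N v, w) = m(v, w)` for all `v, w`. -/
theorem stmt0 {V : Type*} [AddCommGroup V] [Module ℝ V]
    (A m : LinearMap.BilinForm ℝ V)
    (hAsym : ∀ u v : V, A u v = A v u)
    (hApsd : ∀ v : V, 0 ≤ A v v)
    (hm : ∀ v : V, 0 ≤ m v v)
    (N : V → V)
    (hN : ∀ v w : V, A (N v) w = m v w) :
    ∀ u : V,
      m u u + (1 / 2) * (A u u + A (N u) (N u)) ≤
        m u (u + N u) + A u (u + N u) := by
  intro u
  have h1 : m u (u + N u) = m u u + A (N u) (N u) := by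
    rw [map_add, hN u (N u)]
  have h2 : A u (u + N u) = A u u + m u u := by
    rw [map_add, hAsym u (N u), hN u u]
  rw [h1, h2]
  nlinarith [hm u, hApsd u, hApsd (N u)]
end

section
/- For every u ∈ V one has B(u, u + N u) ≥ (1/(2√2)) · |||u||| · ‖u + N u‖_A. In particular, whenever ‖·‖_A is a norm on V, the inf-sup estimate (1/(2√2)) |||u||| ≤ sup_{v ∈ V, v ≠ 0} B(u,v)/‖v‖_A holds for every u ∈ V. (Abstract form of Theorem 3.4, the first inf-sup stability estimate.) -/
/-- Abstract form of Theorem 3.4 (first inf-sup stability estimate).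
With `B(u,v) := m(u,v) + A(u,v)`, `‖v‖_A := √(A(v,v))` and
`|||u||| := √(m(u,u) + A(u,u) + A(N u, N u))`, one has
`B(u, u + N u) ≥ (1/(2√2)) · |||u||| · ‖u + N u‖_A` for every `u`; in particular,
whenever `‖·‖_A` is a norm, the inf-sup estimate
`(1/(2√2)) |||u||| ≤ sup_{v ≠ 0} B(u,v)/‖v‖_A` holds for every `u`. -/
theorem stmt1 {V : Type*} [AddCommGroup V] [Module ℝ V]
    (A m : LinearMap.BilinForm ℝ V)
    (hAsym : ∀ u v : V, A u v = A v u)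
    (hApsd : ∀ v : V, 0 ≤ A v v)
    (hm : ∀ v : V, 0 ≤ m v v)
    (N : V → V)
    (hN : ∀ v w : V, A (N v) w = m v w) :
    (∀ u : V,
      (1 / (2 * Real.sqrt 2)) * Real.sqrt (m u u + A u u + A (N u) (N u)) *
          Real.sqrt (A (u + N u) (u + N u)) ≤
        m u (u + N u) + A u (u + N u)) ∧
    ((∀ v : V, Real.sqrt (A v v) = 0 → v = 0) →
      ∀ u : V,
        (1 / (2 * Real.sqrt 2)) * Real.sqrt (m u u + A u u + A (N u) (N u)) ≤
          sSup {r : ℝ | ∃ v : V, v ≠ 0 ∧ r = (m u v + A u v) / Real.sqrt (A v v)}) := by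
  -- key algebraic identities
  have key : ∀ u : V, m u (u + N u) + A u (u + N u)
      = (m u u + A u u + A (N u) (N u)) + m u u := by
    intro u
    have h1 : A u (N u) = m u u := by rw [hAsym]; exact hN u u
    have h2 : m u (N u) = A (N u) (N u) := (hN u (N u)).symm
    simp only [map_add, h1, h2]
    ring
  have expand : ∀ u : V, A (u + N u) (u + N u)
      = (m u u + A u u + A (N u) (N u)) + m u u := by
    intro u
    have h1 : A u (N u) = m u u := by rw [hAsym]; exact hN u u
    have h3 : A (N u) u = m u u := hN u u
    simp only [map_add, LinearMap.add_apply, h1, h3]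
    ring
  -- the small constant
  have hsqrt2 : (1:ℝ) ≤ Real.sqrt 2 := by
    rw [show (1:ℝ) = Real.sqrt 1 from (Real.sqrt_one).symm]
    exact Real.sqrt_le_sqrt (by norm_num)
  have hc : 1 / (2 * Real.sqrt 2) ≤ 1 := by
    rw [div_le_one (by positivity)]
    linarith
  have hcpos : 0 < 1 / (2 * Real.sqrt 2) := by positivity
  -- Part 1
  have part1 : ∀ u : V,
      (1 / (2 * Real.sqrt 2)) * Real.sqrt (m u u + A u u + A (N u) (N u)) *
          Real.sqrt (A (u + N u) (u + N u)) ≤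
        m u (u + N u) + A u (u + N u) := by
    intro u
    have hM := hm u
    have ha := hApsd u
    have hn := hApsd (N u)
    rw [key u, expand u]
    set s : ℝ := m u u + A u u + A (N u) (N u) with hs
    have hs0 : 0 ≤ s := by positivity
    have hS0 : 0 ≤ s + m u u := by linarith
    have hle : Real.sqrt s ≤ Real.sqrt (s + m u u) := Real.sqrt_le_sqrt (by linarith)
    have hmul : Real.sqrt (s + m u u) * Real.sqrt (s + m u u) = s + m u u :=
      Real.mul_self_sqrt hS0
    have h1 : Real.sqrt s * Real.sqrt (s + m u u) ≤ s + m u u := by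
      nlinarith [Real.sqrt_nonneg s, Real.sqrt_nonneg (s + m u u)]
    nlinarith [Real.sqrt_nonneg s, Real.sqrt_nonneg (s + m u u),
      mul_nonneg (Real.sqrt_nonneg s) (Real.sqrt_nonneg (s + m u u))]
  refine ⟨part1, ?_⟩
  -- Part 2
  intro hnorm u
  -- Cauchy-Schwarz for A
  have cs : ∀ x y : V, A x y ≤ Real.sqrt (A x x) * Real.sqrt (A y y) := by
    intro x y
    have hq : ∀ t : ℝ, 0 ≤ A x x * (t * t) + (2 * A x y) * t + A y y := by
      intro t
      have h := hApsd (t • x + y)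
      simp only [map_add, map_smul, LinearMap.add_apply, LinearMap.smul_apply,
        smul_eq_mul] at h
      rw [hAsym y x] at h
      linarith [h]
    have hd := discrim_le_zero hq
    rw [discrim] at hd
    have h1 : (A x y) ^ 2 ≤ A x x * A y y := by nlinarith
    calc A x y ≤ |A x y| := le_abs_self _
      _ = Real.sqrt ((A x y) ^ 2) := (Real.sqrt_sq_eq_abs _).symm
      _ ≤ Real.sqrt (A x x * A y y) := Real.sqrt_le_sqrt h1
      _ = Real.sqrt (A x x) * Real.sqrt (A y y) := Real.sqrt_mul (hApsd x) _
  set S : Set ℝ := {r : ℝ | ∃ v : V, v ≠ 0 ∧ r = (m u v + A u v) / Real.sqrt (A v v)}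
    with hSdef
  have hsqrtpos : ∀ v : V, v ≠ 0 → 0 < Real.sqrt (A v v) := by
    intro v hv
    rcases lt_or_eq_of_le (Real.sqrt_nonneg (A v v)) with h | h
    · exact h
    · exact absurd (hnorm v h.symm) hv
  have hbdd : BddAbove S := by
    refine ⟨Real.sqrt (A u u) + Real.sqrt (A (N u) (N u)), ?_⟩
    rintro r ⟨v, hv, rfl⟩
    have hAv := hsqrtpos v hv
    rw [div_le_iff₀ hAv]
    have h1 := cs u v
    have h2 : m u v ≤ Real.sqrt (A (N u) (N u)) * Real.sqrt (A v v) := by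
      rw [← hN u v]; exact cs (N u) v
    nlinarith
  by_cases h0 : u + N u = 0
  · -- then the triple norm is zero
    have he := expand u
    rw [h0] at he
    simp only [map_zero, LinearMap.zero_apply] at he
    have hzero : m u u + A u u + A (N u) (N u) = 0 := by
      nlinarith [hm u, hApsd u, hApsd (N u)]
    rw [hzero, Real.sqrt_zero, mul_zero]
    -- 0 ≤ sSup S
    by_cases hS : S.Nonempty
    · obtain ⟨r, v, hv, hr⟩ := hS
      have hneg : -r ∈ S := by
        refine ⟨-v, neg_ne_zero.mpr hv, ?_⟩
        have : A (-v) (-v) = A v v := by simp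
        rw [this, hr]
        simp only [map_neg, LinearMap.neg_apply]
        ring
      rcases le_total 0 r with h | h
      · exact h.trans (le_csSup hbdd ⟨v, hv, hr⟩)
      · exact (by linarith : (0:ℝ) ≤ -r).trans (le_csSup hbdd hneg)
    · rw [Set.not_nonempty_iff_eq_empty] at hS
      rw [hS, Real.sSup_empty]
  · -- use v = u + N u as test function
    have hmem : (m u (u + N u) + A u (u + N u)) / Real.sqrt (A (u + N u) (u + N u)) ∈ S :=
      ⟨u + N u, h0, rfl⟩
    refine le_trans ?_ (le_csSup hbdd hmem)
    rw [le_div_iff₀ (hsqrtpos _ h0)]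
    exact part1 u
end

section
/- For all v, w ∈ V one has B(v, w) ≤ √2 · |||v||| · ‖w‖_A. (Abstract form of Lemma 3.6, the continuity of B_h with respect to the Newton-potential norm.) -/
private lemma cs_aux {V : Type*} [AddCommGroup V] [Module ℝ V]
    (A : LinearMap.BilinForm ℝ V)
    (hAsym : ∀ u v : V, A u v = A v u)
    (hApsd : ∀ v : V, 0 ≤ A v v) (u w : V) :
    A u w ≤ Real.sqrt (A u u) * Real.sqrt (A w w) := by
  have key : (A u w) ^ 2 ≤ A u u * A w w := by
    have h : ∀ t : ℝ, 0 ≤ A w w * (t * t) + (2 * A u w) * t + A u u := by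
      intro t
      have h0 := hApsd (u + t • w)
      have hsym := hAsym w u
      simp only [map_add, map_smul, LinearMap.add_apply, LinearMap.smul_apply,
        smul_eq_mul] at h0
      rw [hsym] at h0
      nlinarith [h0]
    have hd := discrim_le_zero h
    unfold discrim at hd
    nlinarith [hd]
  calc A u w ≤ |A u w| := le_abs_self _
    _ = Real.sqrt ((A u w) ^ 2) := (Real.sqrt_sq_eq_abs _).symm
    _ ≤ Real.sqrt (A u u * A w w) := Real.sqrt_le_sqrt key
    _ = Real.sqrt (A u u) * Real.sqrt (A w w) := Real.sqrt_mul (hApsd u) _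

/-- Abstract form of Lemma 3.6 (continuity of `B_h` with respect to the
Newton-potential norm): `B(v, w) ≤ √2 · |||v||| · ‖w‖_A` for all `v, w`, where
`B(v,w) := m(v,w) + A(v,w)`, `‖w‖_A := √(A(w,w))` and
`|||v||| := √(m(v,v) + A(v,v) + A(N v, N v))`. -/
theorem stmt2 {V : Type*} [AddCommGroup V] [Module ℝ V]
    (A m : LinearMap.BilinForm ℝ V)
    (hAsym : ∀ u v : V, A u v = A v u)
    (hApsd : ∀ v : V, 0 ≤ A v v)
    (hm : ∀ v : V, 0 ≤ m v v)
    (N : V → V)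
    (hN : ∀ v w : V, A (N v) w = m v w) :
    ∀ v w : V,
      m v w + A v w ≤
        Real.sqrt 2 * Real.sqrt (m v v + A v v + A (N v) (N v)) *
          Real.sqrt (A w w) := by
  intro v w
  have h1 : m v w ≤ Real.sqrt (A (N v) (N v)) * Real.sqrt (A w w) := by
    rw [← hN v w]; exact cs_aux A hAsym hApsd _ _
  have h2 : A v w ≤ Real.sqrt (A v v) * Real.sqrt (A w w) := cs_aux A hAsym hApsd _ _
  set a := Real.sqrt (A v v)
  set b := Real.sqrt (A (N v) (N v))
  have ha : 0 ≤ a := Real.sqrt_nonneg _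
  have hb : 0 ≤ b := Real.sqrt_nonneg _
  have ha2 : a ^ 2 = A v v := Real.sq_sqrt (hApsd v)
  have hb2 : b ^ 2 = A (N v) (N v) := Real.sq_sqrt (hApsd _)
  have hw : 0 ≤ Real.sqrt (A w w) := Real.sqrt_nonneg _
  have key : a + b ≤ Real.sqrt 2 * Real.sqrt (m v v + A v v + A (N v) (N v)) := by
    have h2' : (a + b) ^ 2 ≤ 2 * (m v v + A v v + A (N v) (N v)) := by
      nlinarith [sq_nonneg (a - b), hm v]
    calc a + b = Real.sqrt ((a + b) ^ 2) := (Real.sqrt_sq (by positivity)).symm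
      _ ≤ Real.sqrt (2 * (m v v + A v v + A (N v) (N v))) := Real.sqrt_le_sqrt h2'
      _ = Real.sqrt 2 * Real.sqrt (m v v + A v v + A (N v) (N v)) :=
          Real.sqrt_mul (by norm_num) _
  calc m v w + A v w ≤ (a + b) * Real.sqrt (A w w) := by nlinarith
    _ ≤ Real.sqrt 2 * Real.sqrt (m v v + A v v + A (N v) (N v)) * Real.sqrt (A w w) :=
        mul_le_mul_of_nonneg_right key hw
end

section
/- Let u ∈ W and u_h ∈ V, and let C_R ≥ 0 be a constant such that |B(u − u_h, v)| ≤ C_R · ‖v‖_A for all v ∈ V. Then for every v_h ∈ V one has |||u − u_h||| ≤ 5 · |||u − v_h||| + 2√2 · C_R. (Abstract form of the a priori error bound (4.1a) in Theorem 4.1, obtained from the Strang lemma together with the inf-sup estimate of Theorem 3.4 and the continuity bound of Lemma 3.6.) -/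
section Aux

variable {W : Type*} [AddCommGroup W] [Module ℝ W]

/-- Cauchy–Schwarz (absolute-value form) for a symmetric psd bilinear form. -/
lemma cs_abs_aux (A : LinearMap.BilinForm ℝ W)
    (hs : ∀ u v : W, A u v = A v u) (hp : ∀ w : W, 0 ≤ A w w) (x y : W) :
    |A x y| ≤ Real.sqrt (A x x) * Real.sqrt (A y y) := by
  have key : ∀ t : ℝ, 0 ≤ A y y * (t * t) + (2 * A x y) * t + A x x := by
    intro t
    have h := hp (x + t • y)
    have e : A (x + t • y) (x + t • y)
        = A y y * (t * t) + (2 * A x y) * t + A x x := by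
      simp only [map_add, map_smul, LinearMap.add_apply, LinearMap.smul_apply,
        smul_eq_mul]
      rw [hs y x]; ring
    rw [e] at h; exact h
  have hd := discrim_le_zero key
  rw [discrim] at hd
  have hsq : (A x y) ^ 2 ≤ A x x * A y y := by nlinarith
  calc |A x y| = Real.sqrt ((A x y) ^ 2) := (Real.sqrt_sq_eq_abs _).symm
    _ ≤ Real.sqrt (A x x * A y y) := Real.sqrt_le_sqrt hsq
    _ = Real.sqrt (A x x) * Real.sqrt (A y y) := Real.sqrt_mul (hp x) _

/-- Triangle inequality for the seminorm induced by a symmetric psd bilinear form. -/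
lemma tri_aux (A : LinearMap.BilinForm ℝ W)
    (hs : ∀ u v : W, A u v = A v u) (hp : ∀ w : W, 0 ≤ A w w) (x y : W) :
    Real.sqrt (A (x + y) (x + y)) ≤ Real.sqrt (A x x) + Real.sqrt (A y y) := by
  have h1 := cs_abs_aux A hs hp x y
  have h1' : A x y ≤ Real.sqrt (A x x) * Real.sqrt (A y y) :=
    (le_abs_self _).trans h1
  have e : A (x + y) (x + y) = A x x + 2 * A x y + A y y := by
    simp only [map_add, LinearMap.add_apply]
    rw [hs y x]; ring
  have hx := Real.sq_sqrt (hp x)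
  have hy := Real.sq_sqrt (hp y)
  have h2 : A (x + y) (x + y) ≤ (Real.sqrt (A x x) + Real.sqrt (A y y)) ^ 2 := by
    rw [e]; nlinarith [Real.sqrt_nonneg (A x x), Real.sqrt_nonneg (A y y)]
  calc Real.sqrt (A (x + y) (x + y))
      ≤ Real.sqrt ((Real.sqrt (A x x) + Real.sqrt (A y y)) ^ 2) := Real.sqrt_le_sqrt h2
    _ = Real.sqrt (A x x) + Real.sqrt (A y y) := Real.sqrt_sq (by positivity)

end Aux

set_option maxHeartbeats 1000000 in
/-- Abstract form of the a priori error bound (4.1a) in Theorem 4.1.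
`W` is a real vector space, `V ⊆ W` a subspace (the discrete space), `A` a
symmetric positive semidefinite bilinear form with `‖w‖_A := √(A(w,w))`, `m` a
bilinear form and `j` a seminorm with `m(w,w) = j(w)²`, and `N` a linear map
with range in `V` satisfying `A(N w, v) = m(w, v)` for all `w ∈ W`, `v ∈ V`
(the discrete Newton potential).  With `B := m + A` and
`|||w||| := √(j(w)² + A(w,w) + A(N w, N w))`, if `u ∈ W`, `u_h ∈ V` and
`C_R ≥ 0` satisfies `|B(u − u_h, v)| ≤ C_R ‖v‖_A` for all `v ∈ V`, then for
every `v_h ∈ V` one has `|||u − u_h||| ≤ 5 |||u − v_h||| + 2√2 C_R`. -/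
theorem stmt3 {W : Type*} [AddCommGroup W] [Module ℝ W]
    (V : Submodule ℝ W)
    (A m : LinearMap.BilinForm ℝ W)
    (hAsym : ∀ u v : W, A u v = A v u)
    (hApsd : ∀ w : W, 0 ≤ A w w)
    (j : Seminorm ℝ W)
    (hmj : ∀ w : W, m w w = (j w) ^ 2)
    (N : W →ₗ[ℝ] W)
    (hNrange : ∀ w : W, N w ∈ V)
    (hNewton : ∀ w : W, ∀ v ∈ V, A (N w) v = m w v)
    (u uh : W) (huh : uh ∈ V)
    (CR : ℝ) (hCR : 0 ≤ CR)
    (hres : ∀ v ∈ V, |m (u - uh) v + A (u - uh) v| ≤ CR * Real.sqrt (A v v)) :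
    ∀ vh ∈ V,
      Real.sqrt ((j (u - uh)) ^ 2 + A (u - uh) (u - uh) + A (N (u - uh)) (N (u - uh))) ≤
        5 * Real.sqrt ((j (u - vh)) ^ 2 + A (u - vh) (u - vh) + A (N (u - vh)) (N (u - vh))) +
          2 * Real.sqrt 2 * CR := by
  intro vh hvh
  -- the symmetric bilinear form whose quadratic form is `|||·|||²`
  obtain ⟨S, hSapp⟩ : ∃ S : LinearMap.BilinForm ℝ W,
      ∀ a b : W, S a b = (m a b + m b a) / 2 + A a b + A (N a) (N b) := by
    refine ⟨(1/2 : ℝ) • (m + m.flip) + A + A.compl₁₂ N N, fun a b => ?_⟩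
    simp only [LinearMap.add_apply, LinearMap.smul_apply, LinearMap.compl₁₂_apply,
      smul_eq_mul]
    rw [show (m.flip a) b = m b a from rfl]
    ring
  have hSsym : ∀ a b : W, S a b = S b a := by
    intro a b
    rw [hSapp, hSapp, hAsym a b, hAsym (N a) (N b)]; ring
  have hSdiag : ∀ w : W, S w w = (j w) ^ 2 + A w w + A (N w) (N w) := by
    intro w; rw [hSapp, hmj]; ring
  have hSpsd : ∀ w : W, 0 ≤ S w w := by
    intro w; rw [hSdiag]
    have := hApsd w; have := hApsd (N w); positivity
  set η := u - vh with hη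
  set d := vh - uh with hd
  have heη : u - uh = η + d := by rw [hη, hd]; abel
  have hdV : d ∈ V := V.sub_mem hvh huh
  -- the key constant
  set K : ℝ := CR + Real.sqrt (A (N η) (N η)) + Real.sqrt (A η η) with hK
  have hKnn : 0 ≤ K := by
    have := Real.sqrt_nonneg (A (N η) (N η)); have := Real.sqrt_nonneg (A η η)
    rw [hK]; linarith
  -- residual-type bound for `d`
  have hBd : ∀ v ∈ V, m d v + A d v ≤ K * Real.sqrt (A v v) := by
    intro v hv
    have h1 := hres v hv
    have h2 := cs_abs_aux A hAsym hApsd (N η) v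
    have h3 := cs_abs_aux A hAsym hApsd η v
    have hm : m η v = A (N η) v := (hNewton η v hv).symm
    have hsplit : m d v + A d v = (m (u - uh) v + A (u - uh) v) - (m η v + A η v) := by
      have hde : d = (u - uh) - η := by rw [hd, hη]; abel
      rw [hde]; simp only [map_sub, LinearMap.sub_apply]; ring
    rw [hsplit, hm]
    have h1' := (abs_le.mp h1).2
    have h2' := (abs_le.mp h2).1
    have h3' := (abs_le.mp h3).1
    rw [hK]; nlinarith [Real.sqrt_nonneg (A v v)]
  -- bound on the energy part of `d`
  have hjd : 0 ≤ m d d := by rw [hmj]; positivity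
  set s : ℝ := Real.sqrt (m d d + A d d) with hs
  have hs2 : s ^ 2 = m d d + A d d := Real.sq_sqrt (by linarith [hApsd d])
  have hsK : s ≤ K := by
    have h1 := hBd d hdV
    have h2 : Real.sqrt (A d d) ≤ s := Real.sqrt_le_sqrt (by linarith)
    have hss : s * s ≤ K * s := by
      have : K * Real.sqrt (A d d) ≤ K * s := mul_le_mul_of_nonneg_left h2 hKnn
      nlinarith [hs2]
    rcases eq_or_lt_of_le (Real.sqrt_nonneg (m d d + A d d)) with h0 | h0
    · rw [hs]; rw [← h0]; exact hKnn
    · exact le_of_mul_le_mul_right hss h0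
  -- bound on the Newton-potential part of `d`
  set t : ℝ := Real.sqrt (A (N d) (N d)) with ht
  have ht2 : t ^ 2 = A (N d) (N d) := Real.sq_sqrt (hApsd (N d))
  have htK : t ≤ K := by
    have h1 := hBd (N d) (hNrange d)
    have hmN : m d (N d) = A (N d) (N d) := (hNewton d (N d) (hNrange d)).symm
    have hAdN : A d (N d) = m d d := by rw [hAsym]; exact hNewton d d hdV
    have htt : t * t ≤ K * t := by
      rw [hmN, hAdN] at h1; nlinarith [ht2]
    rcases eq_or_lt_of_le (Real.sqrt_nonneg (A (N d) (N d))) with h0 | h0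
    · rw [ht]; rw [← h0]; exact hKnn
    · exact le_of_mul_le_mul_right htt h0
  -- hence `|||d||| ≤ √2 K`
  have hdnorm : Real.sqrt (S d d) ≤ Real.sqrt 2 * K := by
    have h1 : S d d ≤ 2 * K ^ 2 := by
      rw [hSdiag, ← hmj]; nlinarith [hs2, ht2, Real.sqrt_nonneg (m d d + A d d),
        Real.sqrt_nonneg (A (N d) (N d))]
    calc Real.sqrt (S d d) ≤ Real.sqrt (2 * K ^ 2) := Real.sqrt_le_sqrt h1
      _ = Real.sqrt 2 * K := by
          rw [Real.sqrt_mul (by norm_num), Real.sqrt_sq hKnn]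
  -- `K ≤ CR + √2 |||η|||`
  set Tη : ℝ := Real.sqrt (S η η) with hTη
  have hTη2 : Tη ^ 2 = S η η := Real.sq_sqrt (hSpsd η)
  have hKT : K ≤ CR + Real.sqrt 2 * Tη := by
    set a : ℝ := Real.sqrt (A η η)
    set b : ℝ := Real.sqrt (A (N η) (N η))
    have ha2 : a ^ 2 = A η η := Real.sq_sqrt (hApsd η)
    have hb2 : b ^ 2 = A (N η) (N η) := Real.sq_sqrt (hApsd (N η))
    have hab : a + b ≤ Real.sqrt 2 * Tη := by
      have h1 : (a + b) ^ 2 ≤ (Real.sqrt 2 * Tη) ^ 2 := by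
        have h2 : (Real.sqrt 2 * Tη) ^ 2 = 2 * S η η := by
          rw [mul_pow, Real.sq_sqrt (by norm_num : (0:ℝ) ≤ 2), hTη2]
        rw [h2, hSdiag]
        nlinarith [sq_nonneg (a - b), sq_nonneg (j η), ha2, hb2]
      have hnn : 0 ≤ Real.sqrt 2 * Tη := by positivity
      calc a + b = Real.sqrt ((a + b) ^ 2) := (Real.sqrt_sq (by positivity)).symm
        _ ≤ Real.sqrt ((Real.sqrt 2 * Tη) ^ 2) := Real.sqrt_le_sqrt h1
        _ = Real.sqrt 2 * Tη := Real.sqrt_sq hnn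
    rw [hK]; linarith
  -- triangle inequality and conclusion
  have htri : Real.sqrt (S (η + d) (η + d)) ≤ Tη + Real.sqrt (S d d) :=
    tri_aux S hSsym hSpsd η d
  have hgoal1 : Real.sqrt (S (u - uh) (u - uh)) ≤ 5 * Tη + 2 * Real.sqrt 2 * CR := by
    rw [heη]
    have hTηnn : 0 ≤ Tη := Real.sqrt_nonneg _
    have hs2nn : (0:ℝ) ≤ Real.sqrt 2 := Real.sqrt_nonneg 2
    have h1 : Real.sqrt (S d d) ≤ Real.sqrt 2 * (CR + Real.sqrt 2 * Tη) :=
      hdnorm.trans (mul_le_mul_of_nonneg_left hKT hs2nn)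
    have h2 : Real.sqrt 2 * Real.sqrt 2 = 2 := Real.mul_self_sqrt (by norm_num)
    calc Real.sqrt (S (η + d) (η + d)) ≤ Tη + Real.sqrt (S d d) := htri
      _ ≤ Tη + Real.sqrt 2 * (CR + Real.sqrt 2 * Tη) := by linarith
      _ = 3 * Tη + Real.sqrt 2 * CR := by rw [mul_add, ← mul_assoc, h2]; ring
      _ ≤ 5 * Tη + 2 * Real.sqrt 2 * CR := by
          have h3 : 0 ≤ Real.sqrt 2 * CR := mul_nonneg hs2nn hCR
          linarith
  rw [← hSdiag, ← hSdiag]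
  exact hgoal1
end

section
/- For every natural number p, every real h > 0, and every real polynomial f of degree at most p, one has f(0)² ≤ ((p+1)²/h) · ∫_0^h f(t)² dt, and likewise f(h)² ≤ ((p+1)²/h) · ∫_0^h f(t)² dt. -/
/-!
Let `Lₙ` be the shifted Legendre polynomials on `[0, 1]`, normalised by `Lₙ(0) = 1`; then
`Lₙ(1) = (-1)ⁿ`, `Lₙ'(0) = -n(n+1)`, and by Rodrigues' formula and repeated integration by parts
`Lₙ` is orthogonal to every polynomial of degree `< n`. For `G = L_{p+1} + L_p` one has `G(0) = 2`
and `G(1) = 0`, so a single integration by parts shows that `K = -G'/2` reproduces evaluation at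
`0` on polynomials of degree `≤ p`: `∫₀¹ q K = q(0)`. Cauchy–Schwarz then gives
`q(0)² ≤ (∫₀¹ K²) (∫₀¹ q²) = K(0) ∫₀¹ q²` with `K(0) = (p+1)²`. Rescaling `[0, 1]` to `[0, h]`
gives the bound at `0`, and the reflection `t ↦ h - t` the bound at `h`.
-/

open MeasureTheory Polynomial

namespace Polynomial

noncomputable def intervalL2Form (a b : ℝ) : LinearMap.BilinForm ℝ ℝ[X] :=
  LinearMap.mk₂ ℝ (fun f g => ∫ x in a..b, f.eval x * g.eval x)
    (fun f₁ f₂ g => by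
      simp only [eval_add, add_mul]
      exact intervalIntegral.integral_add ((by fun_prop : Continuous _).intervalIntegrable _ _)
        ((by fun_prop : Continuous _).intervalIntegrable _ _))
    (fun c f g => by
      simp only [eval_smul, smul_eq_mul, mul_assoc]
      exact intervalIntegral.integral_const_mul c _)
    (fun f g₁ g₂ => by
      simp only [eval_add, mul_add]
      exact intervalIntegral.integral_add ((by fun_prop : Continuous _).intervalIntegrable _ _)
        ((by fun_prop : Continuous _).intervalIntegrable _ _))
    (fun c f g => by
      simp only [eval_smul, smul_eq_mul, mul_left_comm _ c]
      exact intervalIntegral.integral_const_mul c _)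

variable {a b : ℝ}

theorem intervalL2Form_apply (f g : ℝ[X]) :
    intervalL2Form a b f g = ∫ x in a..b, f.eval x * g.eval x := rfl

theorem intervalL2Form_isSymm : (intervalL2Form a b).IsSymm :=
  ⟨fun f g => by simp only [intervalL2Form_apply, mul_comm]⟩

theorem intervalL2Form_self_nonneg (hab : a ≤ b) (f : ℝ[X]) : 0 ≤ intervalL2Form a b f f :=
  intervalIntegral.integral_nonneg hab fun _ _ => mul_self_nonneg _

theorem intervalL2Form_derivative_left (u v : ℝ[X]) :
    intervalL2Form a b (derivative u) v =
      u.eval b * v.eval b - u.eval a * v.eval a - intervalL2Form a b u (derivative v) := by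
  have := intervalIntegral.integral_mul_deriv_eq_deriv_mul (a := a) (b := b)
    (fun x _ => u.hasDerivAt x) (fun x _ => v.hasDerivAt x)
    ((derivative u).continuous.intervalIntegrable _ _)
    ((derivative v).continuous.intervalIntegrable _ _)
  simp only [intervalL2Form_apply]
  linarith

theorem isRoot_iterate_derivative_of_pow_dvd {R : Type*} [CommRing R] {p : R[X]} {t : R}
    {m n : ℕ} (h : (X - C t) ^ n ∣ p) (hm : m < n) : (derivative^[m] p).IsRoot t :=
  dvd_iff_isRoot.mp <| (dvd_pow_self _ (Nat.sub_ne_zero_of_lt hm)).trans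
    (pow_sub_dvd_iterate_derivative_of_pow_dvd m h)

theorem intervalL2Form_iterate_derivative_eq_zero {u q : ℝ[X]} {n : ℕ}
    (hu : ∀ m < n, (derivative^[m] u).IsRoot a ∧ (derivative^[m] u).IsRoot b)
    (hq : derivative^[n] q = 0) : intervalL2Form a b (derivative^[n] u) q = 0 := by
  induction n generalizing q with
  | zero => rw [Function.iterate_zero_apply] at hq; simp [hq]
  | succ n ih =>
    obtain ⟨hua, hub⟩ := hu n n.lt_succ_self
    rw [Function.iterate_succ_apply', intervalL2Form_derivative_left, hua.eq_zero, hub.eq_zero,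
      ih (fun m hm => hu m (hm.trans n.lt_succ_self)) (by rwa [← Function.iterate_succ_apply])]
    ring

noncomputable def realShiftedLegendre (n : ℕ) : ℝ[X] := (shiftedLegendre n).map (algebraMap ℤ ℝ)

theorem factorial_mul_realShiftedLegendre (n : ℕ) :
    (n.factorial : ℝ[X]) * realShiftedLegendre n = derivative^[n] (X ^ n * (1 - X) ^ n) := by
  have h := congrArg (map (algebraMap ℤ ℝ)) (factorial_mul_shiftedLegendre_eq n)
  rw [← iterate_derivative_map] at h
  simpa [realShiftedLegendre] using h

theorem isRoot_iterate_derivative_rodrigues {m n : ℕ} (hm : m < n) :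
    (derivative^[m] (X ^ n * (1 - X) ^ n : ℝ[X])).IsRoot 0 ∧
      (derivative^[m] (X ^ n * (1 - X) ^ n : ℝ[X])).IsRoot 1 := by
  refine ⟨isRoot_iterate_derivative_of_pow_dvd ?_ hm, isRoot_iterate_derivative_of_pow_dvd ?_ hm⟩
  · simp
  · refine dvd_mul_of_dvd_right (pow_dvd_pow_of_dvd ?_ n) _
    exact ⟨-1, by rw [map_one]; ring⟩

theorem intervalL2Form_realShiftedLegendre_eq_zero {n : ℕ} {q : ℝ[X]}
    (hq : derivative^[n] q = 0) : intervalL2Form 0 1 (realShiftedLegendre n) q = 0 := by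
  have h := intervalL2Form_iterate_derivative_eq_zero
    (fun m hm => isRoot_iterate_derivative_rodrigues hm) hq
  rw [← factorial_mul_realShiftedLegendre, ← nsmul_eq_mul, map_nsmul, LinearMap.smul_apply,
    nsmul_eq_mul] at h
  exact (mul_eq_zero.mp h).resolve_left (by positivity)

theorem realShiftedLegendre_eval_zero (n : ℕ) : (realShiftedLegendre n).eval 0 = 1 := by
  simp [realShiftedLegendre, ← coeff_zero_eq_eval_zero, coeff_shiftedLegendre]

theorem realShiftedLegendre_eval_one (n : ℕ) : (realShiftedLegendre n).eval 1 = (-1) ^ n := by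
  rw [realShiftedLegendre, eval_map_algebraMap, shiftedLegendre_eval_symm, sub_self,
    ← coeff_zero_eq_aeval_zero']
  simp [coeff_shiftedLegendre]

theorem derivative_realShiftedLegendre_eval_zero (n : ℕ) :
    (derivative (realShiftedLegendre n)).eval 0 = -(n * (n + 1)) := by
  simp [realShiftedLegendre, ← coeff_zero_eq_eval_zero, coeff_derivative, coeff_shiftedLegendre]

theorem natDegree_realShiftedLegendre_le (n : ℕ) : (realShiftedLegendre n).natDegree ≤ n :=
  (natDegree_map_le).trans (natDegree_shiftedLegendre n).le

theorem sq_eval_le_of_intervalL2Form_eq_eval {x : ℝ} {K f : ℝ[X]} (hab : a ≤ b)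
    (hK : intervalL2Form a b K K = K.eval x) (hf : intervalL2Form a b f K = f.eval x) :
    f.eval x ^ 2 ≤ K.eval x * intervalL2Form a b f f := by
  rw [← hK, ← hf, mul_comm]
  exact LinearMap.BilinForm.apply_sq_le_of_symm _ (intervalL2Form_self_nonneg hab)
    (LinearMap.BilinForm.isSymm_iff.mp intervalL2Form_isSymm) f K

noncomputable def legendreTraceKernel (p : ℕ) : ℝ[X] :=
  (-1 / 2 : ℝ) • derivative (realShiftedLegendre (p + 1) + realShiftedLegendre p)

theorem natDegree_legendreTraceKernel_le (p : ℕ) : (legendreTraceKernel p).natDegree ≤ p := by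
  refine (natDegree_smul_le _ _).trans <| (natDegree_derivative_le _).trans ?_
  have := (natDegree_add_le _ _).trans <| max_le (natDegree_realShiftedLegendre_le (p + 1))
    ((natDegree_realShiftedLegendre_le p).trans p.le_succ)
  omega

theorem legendreTraceKernel_eval_zero (p : ℕ) :
    (legendreTraceKernel p).eval 0 = ((p : ℝ) + 1) ^ 2 := by
  simp only [legendreTraceKernel, eval_smul, derivative_add, eval_add,
    derivative_realShiftedLegendre_eval_zero, smul_eq_mul]
  push_cast
  ring

theorem intervalL2Form_legendreTraceKernel {p : ℕ} {q : ℝ[X]} (hq : q.natDegree ≤ p) :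
    intervalL2Form 0 1 q (legendreTraceKernel p) = q.eval 0 := by
  have hq' : derivative^[p] (derivative q) = 0 := by
    rw [← Function.iterate_succ_apply]; exact iterate_derivative_eq_zero (Nat.lt_succ_of_le hq)
  have hq'' : derivative^[p + 1] (derivative q) = 0 := by
    rw [Function.iterate_succ_apply', hq', derivative_zero]
  rw [intervalL2Form_isSymm.eq, legendreTraceKernel, map_smul,
    LinearMap.smul_apply, intervalL2Form_derivative_left, map_add, LinearMap.add_apply,
    intervalL2Form_realShiftedLegendre_eq_zero hq', intervalL2Form_realShiftedLegendre_eq_zero hq'']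
  simp only [eval_add, realShiftedLegendre_eval_zero, realShiftedLegendre_eval_one, pow_succ,
    smul_eq_mul]
  ring

theorem sq_eval_zero_le_intervalL2Form {p : ℕ} {f : ℝ[X]} (hf : f.natDegree ≤ p) :
    f.eval 0 ^ 2 ≤ ((p : ℝ) + 1) ^ 2 * intervalL2Form 0 1 f f := by
  rw [← legendreTraceKernel_eval_zero p]
  exact sq_eval_le_of_intervalL2Form_eq_eval zero_le_one
    (intervalL2Form_legendreTraceKernel (natDegree_legendreTraceKernel_le p))
    (intervalL2Form_legendreTraceKernel hf)

theorem sq_eval_zero_le_integral {p : ℕ} {h : ℝ} (hh : 0 < h) {f : ℝ[X]}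
    (hf : f.natDegree ≤ p) :
    f.eval 0 ^ 2 ≤ (((p : ℝ) + 1) ^ 2 / h) * ∫ t in (0 : ℝ)..h, f.eval t ^ 2 := by
  have hdeg : (f.comp (C h * X)).natDegree ≤ p := by
    rwa [natDegree_comp, natDegree_C_mul_X _ hh.ne', mul_one]
  have hscale : intervalL2Form 0 1 (f.comp (C h * X)) (f.comp (C h * X)) =
      h⁻¹ * ∫ t in (0 : ℝ)..h, f.eval t ^ 2 := by
    simp only [intervalL2Form_apply, eval_comp, eval_mul, eval_C, eval_X, ← sq]
    rw [intervalIntegral.integral_comp_mul_left (fun t => f.eval t ^ 2) hh.ne', mul_zero,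
      mul_one, smul_eq_mul]
  have := sq_eval_zero_le_intervalL2Form hdeg
  rwa [hscale, eval_comp, eval_mul, eval_C, eval_X, mul_zero, ← mul_assoc, ← div_eq_mul_inv]
    at this

end Polynomial

/-- One-dimensional case of the sharp polynomial trace inequality of Lemma 3.8:
for every polynomial `f` of degree at most `p` and every `h > 0`,
`f(0)² ≤ ((p+1)²/h) ∫_0^h f(t)² dt` and `f(h)² ≤ ((p+1)²/h) ∫_0^h f(t)² dt`,
where the integral is the Lebesgue integral over `(0, h)`. -/
theorem stmt6 (p : ℕ) (h : ℝ) (hh : 0 < h) (f : Polynomial ℝ)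
    (hf : f.natDegree ≤ p) :
    (f.eval 0) ^ 2 ≤
        (((p : ℝ) + 1) ^ 2 / h) * ∫ t in Set.Ioo (0 : ℝ) h, (f.eval t) ^ 2 ∧
      (f.eval h) ^ 2 ≤
        (((p : ℝ) + 1) ^ 2 / h) * ∫ t in Set.Ioo (0 : ℝ) h, (f.eval t) ^ 2 := by
  have hreflect : ∫ t in (0 : ℝ)..h, (f.comp (C h - X)).eval t ^ 2 =
      ∫ t in (0 : ℝ)..h, f.eval t ^ 2 := by
    simpa using
      intervalIntegral.integral_comp_sub_left (fun t => f.eval t ^ 2) (a := 0) (b := h) h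
  have hdeg : (f.comp (C h - X)).natDegree ≤ p := by
    rwa [natDegree_comp, natDegree_sub, natDegree_X_sub_C, mul_one]
  have h0 := sq_eval_zero_le_integral hh hf
  have h1 := sq_eval_zero_le_integral hh hdeg
  rw [hreflect, eval_comp, eval_sub, eval_C, eval_X, sub_zero] at h1
  rw [← integral_Ioc_eq_integral_Ioo, ← intervalIntegral.integral_of_le hh.le]
  exact ⟨h0, h1⟩
end

section
/- There exists a constant C > 0 such that for every natural number p ≥ 1, all real numbers a < b, and every real polynomial f of degree at most p, one has ∫_a^b f'(t)² dt ≤ C · p⁴ · (b − a)^{−2} · ∫_a^b f(t)² dt, where f' denotes the derivative polynomial of f. -/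
/-!
Expand `f` in the shifted Legendre polynomials `Lₖ`, normalised by `Lₖ(0) = 1`, `Lₖ(1) = (-1)ᵏ`,
so that `‖Lₖ‖² = 1/(2k+1)` in `L²(0,1)`. Integrating by parts, `⟨Lₖ', Lⱼ⟩` equals
`(-1)^(k+j) - 1` for `j ≤ k` and vanishes for `j > k`; hence every Legendre coefficient of `f'` is
at most `2 ∑ₖ (2k+1) |⟨f, Lₖ⟩|`, which Cauchy–Schwarz and Parseval bound by `2 (p+1) ‖f‖`.
Parseval for `f'` then gives `‖f'‖² ≤ 4 (p+1)⁴ ‖f‖²` on `[0,1]`, and an affine change of variables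
moves this to `[a,b]`.
-/

open MeasureTheory intervalIntegral Polynomial Finset
open scoped Nat

noncomputable def polyInner : ℝ[X] →ₗ[ℝ] ℝ[X] →ₗ[ℝ] ℝ :=
  LinearMap.mk₂ ℝ (fun f g => ∫ x in (0 : ℝ)..1, f.eval x * g.eval x)
    (fun f₁ f₂ g => by
      simp only [eval_add, add_mul]
      exact integral_add ((f₁.continuous.mul g.continuous).intervalIntegrable 0 1)
        ((f₂.continuous.mul g.continuous).intervalIntegrable 0 1))
    (fun c f g => by
      simp only [eval_smul, smul_eq_mul, mul_assoc, intervalIntegral.integral_const_mul])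
    (fun f g₁ g₂ => by
      simp only [eval_add, mul_add]
      exact integral_add ((f.continuous.mul g₁.continuous).intervalIntegrable 0 1)
        ((f.continuous.mul g₂.continuous).intervalIntegrable 0 1))
    (fun c f g => by
      simp only [eval_smul, smul_eq_mul, mul_left_comm, intervalIntegral.integral_const_mul])

lemma polyInner_apply (f g : ℝ[X]) :
    polyInner f g = ∫ x in (0 : ℝ)..1, f.eval x * g.eval x := rfl

lemma polyInner_comm (f g : ℝ[X]) : polyInner f g = polyInner g f := by
  simp only [polyInner_apply, mul_comm]

lemma polyInner_derivative_left (u v : ℝ[X]) :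
    polyInner (derivative u) v =
      u.eval 1 * v.eval 1 - u.eval 0 * v.eval 0 - polyInner u (derivative v) := by
  rw [polyInner_comm, polyInner_apply, polyInner_apply,
    integral_mul_deriv_eq_deriv_mul (fun x _ => v.hasDerivAt x) (fun x _ => u.hasDerivAt x)
      (v.derivative.continuous.intervalIntegrable 0 1)
      (u.derivative.continuous.intervalIntegrable 0 1)]
  simp only [mul_comm]

lemma eval_iterate_derivative_eq_zero_of_pow_dvd {R : Type*} [CommRing R] {p : R[X]} {a : R}
    {n k : ℕ} (hp : (X - C a) ^ n ∣ p) (hk : k < n) : (derivative^[k] p).eval a = 0 :=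
  dvd_iff_isRoot.mp <| (dvd_pow_self _ (Nat.sub_ne_zero_of_lt hk)).trans
    (pow_sub_dvd_iterate_derivative_of_pow_dvd k hp)

lemma polyInner_iterate_derivative_eq_zero {n k : ℕ} (hk : k ≤ n) {q : ℝ[X]}
    (hq : derivative^[k] q = 0) :
    polyInner (derivative^[k] (X ^ n * (1 - X) ^ n)) q = 0 := by
  induction k generalizing q with
  | zero => simp only [Function.iterate_zero_apply] at hq; simp [hq]
  | succ k ih =>
    have h0 : (X - C 0) ^ n ∣ (X ^ n * (1 - X) ^ n : ℝ[X]) := by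
      simp [dvd_mul_right]
    have h1 : (X - C 1) ^ n ∣ (X ^ n * (1 - X) ^ n : ℝ[X]) :=
      (pow_dvd_pow_of_dvd ⟨-1, by simp⟩ n).mul_left _
    rw [Function.iterate_succ_apply', polyInner_derivative_left,
      eval_iterate_derivative_eq_zero_of_pow_dvd h0 hk,
      eval_iterate_derivative_eq_zero_of_pow_dvd h1 hk,
      ih (by omega) (by rwa [← Function.iterate_succ_apply])]
    ring

noncomputable def legendre (n : ℕ) : ℝ[X] := (shiftedLegendre n).map (algebraMap ℤ ℝ)

lemma degree_legendre (n : ℕ) : (legendre n).degree = n := by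
  rw [legendre, degree_map_eq_of_injective (RingHom.injective_int _), degree_shiftedLegendre]

lemma natDegree_legendre (n : ℕ) : (legendre n).natDegree = n :=
  natDegree_eq_of_degree_eq_some (degree_legendre n)

lemma legendre_ne_zero (n : ℕ) : legendre n ≠ 0 := by
  simp [← degree_eq_bot, degree_legendre]

lemma coeff_legendre_self (n : ℕ) : (legendre n).coeff n = (-1) ^ n * n.centralBinom := by
  simp [legendre, coeff_map, coeff_shiftedLegendre, Nat.centralBinom_eq_two_mul_choose, two_mul]

lemma legendre_eval_zero (n : ℕ) : (legendre n).eval 0 = 1 := by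
  rw [← coeff_zero_eq_eval_zero]
  simp [legendre, coeff_map, coeff_shiftedLegendre]

lemma legendre_eval_one (n : ℕ) : (legendre n).eval 1 = (-1) ^ n := by
  rw [legendre, eval_map_algebraMap, shiftedLegendre_eval_symm, sub_self, ← eval_map_algebraMap,
    ← legendre, legendre_eval_zero, mul_one]

lemma factorial_smul_legendre (n : ℕ) :
    (n ! : ℝ) • legendre n = derivative^[n] (X ^ n * (1 - X) ^ n) := by
  have h := congrArg (map (algebraMap ℤ ℝ)) (factorial_mul_shiftedLegendre_eq n)
  rw [Polynomial.map_mul, ← iterate_derivative_map] at h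
  simpa [legendre, smul_eq_C_mul] using h

lemma polyInner_legendre_eq_zero {n : ℕ} {q : ℝ[X]} (hq : q.degree < n) :
    polyInner (legendre n) q = 0 := by
  have hDq : derivative^[n] q = 0 := by
    rcases eq_or_ne q 0 with rfl | hq0
    · simp
    · exact iterate_derivative_eq_zero ((natDegree_lt_iff_degree_lt hq0).mpr hq)
  have h := polyInner_iterate_derivative_eq_zero le_rfl hDq
  rw [← factorial_smul_legendre, map_smul, LinearMap.smul_apply, smul_eq_mul] at h
  exact (mul_eq_zero.mp h).resolve_left (by positivity)

lemma polyInner_legendre_legendre_of_ne {j k : ℕ} (h : j ≠ k) :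
    polyInner (legendre j) (legendre k) = 0 := by
  rcases h.lt_or_gt with h | h
  · rw [polyInner_comm]
    exact polyInner_legendre_eq_zero (by rw [degree_legendre]; exact_mod_cast h)
  · exact polyInner_legendre_eq_zero (by rw [degree_legendre]; exact_mod_cast h)

lemma degree_derivative_legendre_lt (n : ℕ) : (derivative (legendre n)).degree < n :=
  degree_legendre n ▸ degree_derivative_lt (legendre_ne_zero n)

lemma polyInner_derivative_legendre_of_le {j k : ℕ} (h : j ≤ k) :
    polyInner (derivative (legendre k)) (legendre j) = (-1) ^ (k + j) - 1 := by
  rw [polyInner_derivative_left, legendre_eval_one, legendre_eval_one, legendre_eval_zero,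
    legendre_eval_zero, polyInner_legendre_eq_zero
      ((degree_derivative_legendre_lt j).trans_le (by exact_mod_cast h)), pow_add]
  ring

lemma abs_polyInner_derivative_legendre_le (j k : ℕ) :
    |polyInner (derivative (legendre k)) (legendre j)| ≤ 2 := by
  rcases lt_or_ge k j with h | h
  · rw [polyInner_comm, polyInner_legendre_eq_zero
      ((degree_derivative_legendre_lt k).trans (by exact_mod_cast h)), abs_zero]
    norm_num
  · rw [polyInner_derivative_legendre_of_le h]
    rcases neg_one_pow_eq_or ℝ (k + j) with h | h <;> rw [h] <;> norm_num

lemma polyInner_legendre_eq_coeff_mul {n : ℕ} {q : ℝ[X]} (hq : q.degree ≤ n) :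
    polyInner q (legendre n) =
      q.coeff n / (legendre n).coeff n * polyInner (legendre n) (legendre n) := by
  set c := q.coeff n / (legendre n).coeff n
  have hlc : (legendre n).coeff n ≠ 0 := by
    rw [coeff_legendre_self]; exact mul_ne_zero (pow_ne_zero _ (by norm_num))
      (by exact_mod_cast Nat.centralBinom_ne_zero n)
  have hdeg : (q - c • legendre n).degree < n := by
    rw [degree_lt_iff_coeff_zero]
    intro m hm
    rcases (Nat.cast_le.mp hm : n ≤ m).eq_or_lt with rfl | hlt
    · simp [c, hlc]
    · rw [coeff_sub, coeff_smul, coeff_eq_zero_of_degree_lt (hq.trans_lt (by exact_mod_cast hlt)),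
        coeff_eq_zero_of_degree_lt (by rw [degree_legendre]; exact_mod_cast hlt)]
      simp
  have h := polyInner_legendre_eq_zero hdeg
  rw [polyInner_comm, map_sub, map_smul, LinearMap.sub_apply, LinearMap.smul_apply,
    sub_eq_zero] at h
  rw [h, smul_eq_mul]

/-- Read off from `⟨L_{n+1}', Lₙ⟩ = -2` by comparing leading coefficients, which avoids computing
the Beta integral `∫₀¹ xⁿ(1-x)ⁿ`. -/
lemma polyInner_legendre_self (n : ℕ) :
    polyInner (legendre n) (legendre n) = ((2 * n + 1 : ℝ))⁻¹ := by
  have h := polyInner_legendre_eq_coeff_mul (q := derivative (legendre (n + 1))) (n := n)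
    (degree_le_of_natDegree_le ((natDegree_derivative_le _).trans (by simp [natDegree_legendre])))
  rw [polyInner_derivative_legendre_of_le n.le_succ, coeff_derivative, coeff_legendre_self,
    coeff_legendre_self] at h
  have hc := congrArg (Nat.cast (R := ℝ)) (Nat.succ_mul_centralBinom_succ n)
  push_cast at hc
  have hratio : (-1 : ℝ) ^ (n + 1) * (n + 1).centralBinom * (n + 1) / ((-1) ^ n * n.centralBinom)
      = -(2 * (2 * n + 1)) := by
    have : (n.centralBinom : ℝ) ≠ 0 := by exact_mod_cast Nat.centralBinom_ne_zero n
    rw [div_eq_iff (by positivity), pow_succ]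
    linear_combination (-(-1 : ℝ) ^ n) * hc
  have hs : (-1 : ℝ) ^ (n.succ + n) = -1 := by
    rw [show n.succ + n = 2 * n + 1 by omega, pow_succ, pow_mul]; norm_num
  rw [hratio, hs] at h
  field_simp
  linarith

lemma exists_eq_sum_smul_legendre {p : ℕ} {f : ℝ[X]} (hf : f.natDegree ≤ p) :
    ∃ c : ℕ → ℝ, f = ∑ k ∈ range (p + 1), c k • legendre k := by
  let S : Sequence ℝ := ⟨legendre, degree_legendre⟩
  have hmem : f ∈ Submodule.span ℝ (S '' ↑(range (p + 1))) := by
    rw [coe_range, S.span_degreeLT fun i _ =>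
      isUnit_iff_ne_zero.mpr (leadingCoeff_ne_zero.mpr (legendre_ne_zero i)), mem_degreeLT]
    exact (degree_le_of_natDegree_le hf).trans_lt (by exact_mod_cast p.lt_succ_self)
  obtain ⟨l, hl, rfl⟩ := (Finsupp.mem_span_image_iff_linearCombination ℝ).mp hmem
  exact ⟨l, Finsupp.sum_of_support_subset l (by exact_mod_cast (Finsupp.mem_supported ℝ l).mp hl)
    _ fun _ _ => zero_smul ℝ _⟩

lemma polyInner_sum_smul_legendre {m j : ℕ} (c : ℕ → ℝ) (hj : j ∈ range m) :
    polyInner (∑ k ∈ range m, c k • legendre k) (legendre j) = c j / (2 * j + 1) := by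
  rw [map_sum, LinearMap.sum_apply, sum_eq_single_of_mem j hj fun k _ hkj => by
    rw [map_smul, LinearMap.smul_apply, polyInner_legendre_legendre_of_ne hkj, smul_zero]]
  rw [map_smul, LinearMap.smul_apply, polyInner_legendre_self, smul_eq_mul, div_eq_mul_inv]

lemma eq_sum_legendre {p : ℕ} {f : ℝ[X]} (hf : f.natDegree ≤ p) :
    f = ∑ k ∈ range (p + 1), ((2 * k + 1) * polyInner f (legendre k)) • legendre k := by
  obtain ⟨c, hc⟩ := exists_eq_sum_smul_legendre hf
  conv_lhs => rw [hc]
  refine sum_congr rfl fun k hk => ?_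
  rw [hc, polyInner_sum_smul_legendre c hk]
  field_simp

lemma polyInner_self_eq_sum {p : ℕ} {f : ℝ[X]} (hf : f.natDegree ≤ p) :
    polyInner f f = ∑ k ∈ range (p + 1), (2 * k + 1) * polyInner f (legendre k) ^ 2 := by
  nth_rewrite 1 [eq_sum_legendre hf]
  rw [map_sum, LinearMap.sum_apply]
  refine sum_congr rfl fun k _ => ?_
  rw [map_smul, LinearMap.smul_apply, smul_eq_mul, polyInner_comm (legendre k)]
  ring

lemma sum_range_two_mul_add_one (n : ℕ) : ∑ k ∈ range n, (2 * k + 1 : ℝ) = n ^ 2 := by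
  induction n with
  | zero => simp
  | succ n ih => rw [sum_range_succ, ih]; push_cast; ring

lemma polyInner_derivative_self_le {p : ℕ} {f : ℝ[X]} (hf : f.natDegree ≤ p) :
    polyInner (derivative f) (derivative f) ≤ 4 * (p + 1) ^ 4 * polyInner f f := by
  set S := ∑ k ∈ range (p + 1), (2 * k + 1) * |polyInner f (legendre k)|
  have hS : S ^ 2 ≤ (p + 1) ^ 2 * polyInner f f := by
    rw [polyInner_self_eq_sum hf, ← Nat.cast_add_one, ← sum_range_two_mul_add_one]
    refine sum_sq_le_sum_mul_sum_of_sq_le_mul _ (fun k _ => by positivity)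
      (fun k _ => by positivity) fun k _ => le_of_eq ?_
    rw [mul_pow, sq_abs]; ring
  have hcoeff : ∀ j, |polyInner (derivative f) (legendre j)| ≤ 2 * S := by
    intro j
    conv_lhs => rw [eq_sum_legendre hf]
    rw [derivative_sum, map_sum, LinearMap.sum_apply, mul_sum]
    refine (abs_sum_le_sum_abs _ _).trans (sum_le_sum fun k _ => ?_)
    rw [derivative_smul, map_smul, LinearMap.smul_apply, smul_eq_mul, abs_mul, abs_mul,
      abs_of_pos (by positivity : (0 : ℝ) < 2 * k + 1)]
    exact (mul_le_mul_of_nonneg_left (abs_polyInner_derivative_legendre_le j k)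
      (by positivity)).trans_eq (mul_comm _ _)
  have hf' : (derivative f).natDegree ≤ p := (natDegree_derivative_le f).trans (by omega)
  calc polyInner (derivative f) (derivative f)
      = ∑ j ∈ range (p + 1), (2 * j + 1) * polyInner (derivative f) (legendre j) ^ 2 :=
        polyInner_self_eq_sum hf'
    _ ≤ ∑ j ∈ range (p + 1), (2 * j + 1) * (2 * S) ^ 2 :=
        sum_le_sum fun j _ => mul_le_mul_of_nonneg_left (sq_le_sq.mpr ((hcoeff j).trans
          (le_abs_self _))) (by positivity)
    _ = 4 * (p + 1) ^ 2 * S ^ 2 := by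
        rw [← sum_mul, sum_range_two_mul_add_one]; push_cast; ring
    _ ≤ 4 * (p + 1) ^ 4 * polyInner f f := by nlinarith

lemma polyInner_comp_affine (u v : ℝ[X]) {a b : ℝ} (hab : a ≠ b) :
    polyInner (u.comp (C (b - a) * X + C a)) (v.comp (C (b - a) * X + C a)) =
      (b - a)⁻¹ * ∫ t in a..b, u.eval t * v.eval t := by
  rw [polyInner_apply]
  simp only [eval_comp, eval_add, eval_mul, eval_C, eval_X]
  rw [integral_comp_mul_add (fun t => u.eval t * v.eval t) (sub_ne_zero.mpr hab.symm)]
  simp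

theorem integral_derivative_sq_le {p : ℕ} {a b : ℝ} (hab : a < b) {f : ℝ[X]}
    (hf : f.natDegree ≤ p) :
    ∫ t in a..b, (derivative f).eval t ^ 2 ≤
      4 * (p + 1) ^ 4 * ((b - a) ^ 2)⁻¹ * ∫ t in a..b, f.eval t ^ 2 := by
  set A : ℝ[X] := C (b - a) * X + C a
  have hg : (f.comp A).natDegree ≤ p :=
    natDegree_comp_le.trans (by nlinarith [natDegree_linear_le (a := b - a) (b := a)])
  have h := polyInner_derivative_self_le hg
  rw [derivative_comp, show derivative A = C (b - a) by simp [A], ← smul_eq_C_mul] at h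
  simp only [map_smul, LinearMap.smul_apply, smul_eq_mul, A, polyInner_comp_affine _ _ hab.ne,
    ← sq] at h
  have hba : 0 < b - a := sub_pos.mpr hab
  field_simp at h ⊢
  exact h

/-- One-dimensional polynomial inverse estimate (Lemma 3.9, estimate (3.9a)):
there is a constant `C > 0` such that for every `p ≥ 1`, every interval
`(a, b)` and every polynomial `f` of degree at most `p`,
`∫_a^b f'(t)² dt ≤ C p⁴ (b − a)⁻² ∫_a^b f(t)² dt`, where `f'` is the
derivative polynomial of `f`. -/
theorem stmt8 :
    ∃ C : ℝ, 0 < C ∧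
      ∀ p : ℕ, 1 ≤ p → ∀ a b : ℝ, a < b → ∀ f : Polynomial ℝ, f.natDegree ≤ p →
        (∫ t in a..b, ((Polynomial.derivative f).eval t) ^ 2) ≤
          C * (p : ℝ) ^ 4 * ((b - a) ^ 2)⁻¹ * ∫ t in a..b, (f.eval t) ^ 2 := by
  refine ⟨64, by norm_num, fun p hp a b hab f hf => (integral_derivative_sq_le hab hf).trans ?_⟩
  have hcoeff : 4 * ((p : ℝ) + 1) ^ 4 ≤ 64 * (p : ℝ) ^ 4 := by
    have : ((p : ℝ) + 1) ^ 4 ≤ (2 * p) ^ 4 := by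
      gcongr
      linarith [(by exact_mod_cast hp : (1 : ℝ) ≤ p)]
    linarith
  have hI : 0 ≤ ((b - a) ^ 2)⁻¹ * ∫ t in a..b, f.eval t ^ 2 :=
    mul_nonneg (by positivity) (integral_nonneg hab.le fun t _ => sq_nonneg _)
  linarith [mul_le_mul_of_nonneg_right hcoeff hI]
end

section
/- Let a < b be real numbers and let v : ℝ → ℝ be continuously differentiable on [a, b]. Then v(a)² ≤ (b − a)^{−1} ∫_a^b v(s)² ds + 2 · (∫_a^b v(s)² ds)^{1/2} · (∫_a^b v'(s)² ds)^{1/2}, and the same bound holds with v(a)² replaced by v(b)². -/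
/-!
For `x ∈ [a, b]` and any `t ∈ [a, b]`, the fundamental theorem of calculus applied to `v²` gives
`v(x)² ≤ v(t)² + ∫_a^b |2 v v'|`. Averaging over `t` turns `v(t)²` into the mean of `v²`, and
Cauchy–Schwarz bounds `∫_a^b |v v'|` by `‖v‖₂ ‖v'‖₂`.
-/

open MeasureTheory intervalIntegral Set

theorem integral_abs_mul_le_sqrt_mul_sqrt {α : Type*} [MeasurableSpace α] {μ : Measure α}
    {f g : α → ℝ} (hf : MemLp f 2 μ) (hg : MemLp g 2 μ) :
    ∫ x, |f x * g x| ∂μ ≤ √(∫ x, f x ^ 2 ∂μ) * √(∫ x, g x ^ 2 ∂μ) := by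
  rw [← ENNReal.ofReal_ofNat] at hf hg
  simpa only [Real.norm_eq_abs, Real.rpow_two, sq_abs, ← abs_mul, ← Real.sqrt_eq_rpow] using
    integral_mul_norm_le_Lp_mul_Lq Real.HolderConjugate.two_two hf hg

section

variable {f g g' : ℝ → ℝ} {a b : ℝ}

theorem ContinuousOn.memLp_two_restrict_Ioc (hf : ContinuousOn f (Icc a b)) :
    MemLp f 2 (volume.restrict (Ioc a b)) :=
  (memLp_two_iff_integrable_sq
    ((hf.mono Ioc_subset_Icc_self).aestronglyMeasurable measurableSet_Ioc)).2
    ((hf.pow 2).integrableOn_Icc.mono_set Ioc_subset_Icc_self)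

theorem intervalIntegral.integral_abs_mul_le_sqrt_mul_sqrt (hab : a ≤ b)
    (hf : ContinuousOn f (Icc a b)) (hg : ContinuousOn g (Icc a b)) :
    ∫ x in a..b, |f x * g x| ≤ √(∫ x in a..b, f x ^ 2) * √(∫ x in a..b, g x ^ 2) := by
  simp only [integral_of_le hab]
  exact _root_.integral_abs_mul_le_sqrt_mul_sqrt hf.memLp_two_restrict_Ioc
    hg.memLp_two_restrict_Ioc

theorem abs_sub_le_integral_abs_deriv (hderiv : ∀ x ∈ Icc a b, HasDerivAt g (g' x) x)
    (hint : IntervalIntegrable g' volume a b) {s t : ℝ} (hs : s ∈ Icc a b) (ht : t ∈ Icc a b) :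
    |g t - g s| ≤ ∫ x in a..b, |g' x| := by
  wlog hst : s ≤ t generalizing s t
  · rw [abs_sub_comm]
    exact this ht hs (le_of_not_ge hst)
  have hsub : uIcc s t ⊆ Icc a b := by
    rw [uIcc_of_le hst]
    exact Icc_subset_Icc hs.1 ht.2
  have hint_st : IntervalIntegrable g' volume s t :=
    hint.mono_set (by rwa [uIcc_of_le (hs.1.trans hs.2)])
  rw [← integral_eq_sub_of_hasDerivAt (fun x hx => hderiv x (hsub hx)) hint_st]
  calc |∫ x in s..t, g' x| ≤ ∫ x in s..t, |g' x| := abs_integral_le_integral_abs hst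
    _ ≤ ∫ x in a..b, |g' x| :=
      integral_mono_interval hs.1 hst ht.2 (ae_of_all _ fun _ => abs_nonneg _) hint.abs

theorem le_inv_mul_integral_of_forall_le (hab : a < b) (hf : IntervalIntegrable f volume a b)
    {c : ℝ} (h : ∀ t ∈ Icc a b, c ≤ f t) : c ≤ (b - a)⁻¹ * ∫ t in a..b, f t := by
  rw [le_inv_mul_iff₀ (sub_pos.2 hab)]
  simpa using integral_mono_on hab.le intervalIntegrable_const hf h

theorem le_inv_mul_integral_add_integral_abs_deriv (hab : a < b)
    (hderiv : ∀ x ∈ Icc a b, HasDerivAt g (g' x) x) (hint : IntervalIntegrable g' volume a b)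
    {x : ℝ} (hx : x ∈ Icc a b) :
    g x ≤ (b - a)⁻¹ * (∫ t in a..b, g t) + ∫ t in a..b, |g' t| := by
  have hg : IntervalIntegrable g volume a b :=
    ContinuousOn.intervalIntegrable_of_Icc hab.le fun t ht =>
      (hderiv t ht).continuousAt.continuousWithinAt
  have := le_inv_mul_integral_of_forall_le hab hg fun t ht =>
    sub_le_of_abs_sub_le_right (abs_sub_le_integral_abs_deriv hderiv hint ht hx)
  linarith

theorem sq_le_inv_mul_integral_sq_add_two_mul_sqrt_mul_sqrt {v v' : ℝ → ℝ} (hab : a < b)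
    (hderiv : ∀ s ∈ Icc a b, HasDerivAt v (v' s) s) (hcont : ContinuousOn v' (Icc a b))
    {x : ℝ} (hx : x ∈ Icc a b) :
    v x ^ 2 ≤ (b - a)⁻¹ * (∫ s in a..b, v s ^ 2) +
      2 * √(∫ s in a..b, v s ^ 2) * √(∫ s in a..b, v' s ^ 2) := by
  have hv : ContinuousOn v (Icc a b) := fun s hs =>
    (hderiv s hs).continuousAt.continuousWithinAt
  have hsq : ∀ s ∈ Icc a b, HasDerivAt (fun t => v t ^ 2) (2 * (v s * v' s)) s := fun s hs => by
    simpa [mul_assoc] using (hderiv s hs).fun_pow 2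
  have hint : IntervalIntegrable (fun s => 2 * (v s * v' s)) volume a b :=
    (continuousOn_const.mul (hv.mul hcont)).intervalIntegrable_of_Icc hab.le
  calc v x ^ 2 ≤ (b - a)⁻¹ * (∫ s in a..b, v s ^ 2) + ∫ s in a..b, |2 * (v s * v' s)| :=
        le_inv_mul_integral_add_integral_abs_deriv hab hsq hint hx
    _ = (b - a)⁻¹ * (∫ s in a..b, v s ^ 2) + 2 * ∫ s in a..b, |v s * v' s| := by
        simp only [abs_mul (2 : ℝ), abs_two, intervalIntegral.integral_const_mul]
    _ ≤ (b - a)⁻¹ * (∫ s in a..b, v s ^ 2) +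
          2 * (√(∫ s in a..b, v s ^ 2) * √(∫ s in a..b, v' s ^ 2)) := by
        gcongr
        exact intervalIntegral.integral_abs_mul_le_sqrt_mul_sqrt hab.le hv hcont
    _ = _ := by ring

end

/-- Multiplicative trace inequality in one dimension (Section 3.2): for a
function `v` continuously differentiable on `[a, b]` (with derivative `v'`),
`v(a)² ≤ (b − a)⁻¹ ∫_a^b v² + 2 (∫_a^b v²)^{1/2} (∫_a^b v'²)^{1/2}`,
and the same bound holds for `v(b)²`. -/
theorem stmt9 (a b : ℝ) (hab : a < b) (v v' : ℝ → ℝ)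
    (hderiv : ∀ s ∈ Set.Icc a b, HasDerivAt v (v' s) s)
    (hcont : ContinuousOn v' (Set.Icc a b)) :
    (v a) ^ 2 ≤ (b - a)⁻¹ * (∫ s in a..b, (v s) ^ 2) +
        2 * Real.sqrt (∫ s in a..b, (v s) ^ 2) * Real.sqrt (∫ s in a..b, (v' s) ^ 2) ∧
      (v b) ^ 2 ≤ (b - a)⁻¹ * (∫ s in a..b, (v s) ^ 2) +
        2 * Real.sqrt (∫ s in a..b, (v s) ^ 2) * Real.sqrt (∫ s in a..b, (v' s) ^ 2) :=
  ⟨sq_le_inv_mul_integral_sq_add_two_mul_sqrt_mul_sqrt hab hderiv hcont (left_mem_Icc.2 hab.le),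
    sq_le_inv_mul_integral_sq_add_two_mul_sqrt_mul_sqrt hab hderiv hcont (right_mem_Icc.2 hab.le)⟩
end

section
/- Let a < b be real numbers, let q ≥ 1 be a natural number, and let v : ℝ → ℝ be continuously differentiable on [a, b]. Then v(a)² ≤ ((q + 1)/(b − a)) ∫_a^b v(s)² ds + ((b − a)/q) ∫_a^b v'(s)² ds, and the same bound holds with v(a)² replaced by v(b)². -/
open MeasureTheory intervalIntegral Set

/-!
By the fundamental theorem of calculus applied to `v²`, `v(c)² ≤ v(s)² + ∫_a^b |2 v v'|` for all
`c, s ∈ [a, b]`; averaging over `s` gives the multiplicative trace inequality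
`v(c)² ≤ (b - a)⁻¹ ∫ v² + ∫ |2 v v'|`. The weighted Young inequality
`|2xy| ≤ (r/(b - a)) x² + ((b - a)/r) y²`, integrated, then yields the bound for every real `r > 0`,
in particular for `r = q`.
-/

lemma abs_two_mul_le_mul_sq_add_inv_mul_sq {t : ℝ} (ht : 0 < t) (x y : ℝ) :
    |2 * x * y| ≤ t * x ^ 2 + t⁻¹ * y ^ 2 := by
  have hminus : t * x ^ 2 + t⁻¹ * y ^ 2 - 2 * x * y = t⁻¹ * (t * x - y) ^ 2 := by
    field_simp
    ring
  have hplus : t * x ^ 2 + t⁻¹ * y ^ 2 + 2 * x * y = t⁻¹ * (t * x + y) ^ 2 := by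
    field_simp
    ring
  have ht' : 0 ≤ t⁻¹ := inv_nonneg.2 ht.le
  rw [abs_le]
  constructor <;> nlinarith [mul_nonneg ht' (sq_nonneg (t * x - y)),
    mul_nonneg ht' (sq_nonneg (t * x + y))]

lemma abs_integral_le_integral_abs_of_mem_Icc {f : ℝ → ℝ} {a b x y : ℝ} (hab : a ≤ b)
    (hf : IntervalIntegrable f volume a b) (hx : x ∈ Icc a b) (hy : y ∈ Icc a b) :
    |∫ t in x..y, f t| ≤ ∫ t in a..b, |f t| := by
  have hsub : uIcc x y ⊆ uIcc a b := by
    rw [uIcc_of_le hab]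
    exact uIcc_subset_Icc hx hy
  calc |∫ t in x..y, f t| ≤ |(∫ t in x..y, |f t|)| := by
        simpa only [Real.norm_eq_abs] using
          norm_integral_le_abs_integral_norm (μ := volume) (f := f)
    _ ≤ |(∫ t in a..b, |f t|)| :=
        abs_integral_mono_interval (uIoc_subset_uIoc_of_uIcc_subset_uIcc hsub)
          (Filter.Eventually.of_forall fun t ↦ abs_nonneg (f t)) hf.abs
    _ = ∫ t in a..b, |f t| := abs_of_nonneg (integral_nonneg hab fun t _ ↦ abs_nonneg (f t))

section Trace

variable {a b : ℝ} {v v' : ℝ → ℝ}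

lemma sq_le_sq_add_integral_abs (hab : a ≤ b) (hderiv : ∀ s ∈ Icc a b, HasDerivAt v (v' s) s)
    (hcont : ContinuousOn v' (Icc a b)) {c s : ℝ} (hc : c ∈ Icc a b) (hs : s ∈ Icc a b) :
    v c ^ 2 ≤ v s ^ 2 + ∫ t in a..b, |2 * v t * v' t| := by
  have hsub : uIcc s c ⊆ Icc a b := uIcc_subset_Icc hs hc
  have hv : ContinuousOn v (Icc a b) := HasDerivAt.continuousOn hderiv
  have hint : IntervalIntegrable (fun t ↦ 2 * v t * v' t) volume a b :=
    ((continuousOn_const.mul hv).mul hcont).intervalIntegrable_of_Icc hab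
  have hftc : ∫ t in s..c, 2 * v t * v' t = v c ^ 2 - v s ^ 2 :=
    integral_eq_sub_of_hasDerivAt
      (fun t ht ↦ ((hderiv t (hsub ht)).pow 2).congr_deriv (by ring))
      (hint.mono_set (by rwa [uIcc_of_le hab]))
  have hbound := abs_integral_le_integral_abs_of_mem_Icc hab hint hs hc
  rw [hftc] at hbound
  linarith [le_abs_self (v c ^ 2 - v s ^ 2)]

lemma sq_le_integral_sq_div_add_integral_abs (hab : a < b)
    (hderiv : ∀ s ∈ Icc a b, HasDerivAt v (v' s) s) (hcont : ContinuousOn v' (Icc a b))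
    {c : ℝ} (hc : c ∈ Icc a b) :
    v c ^ 2 ≤ (∫ s in a..b, v s ^ 2) / (b - a) + ∫ t in a..b, |2 * v t * v' t| := by
  have hv : ContinuousOn v (Icc a b) := HasDerivAt.continuousOn hderiv
  have hmono := integral_mono_on (g := fun s ↦ v s ^ 2) hab.le intervalIntegrable_const
    ((hv.pow 2).intervalIntegrable_of_Icc (μ := volume) hab.le)
    fun s hs ↦ sub_le_iff_le_add.2 (sq_le_sq_add_integral_abs hab.le hderiv hcont hc hs)
  rw [intervalIntegral.integral_const, smul_eq_mul] at hmono
  rw [← sub_le_iff_le_add, le_div_iff₀ (sub_pos.2 hab), mul_comm]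
  exact hmono

lemma integral_abs_two_mul_le {f g : ℝ → ℝ} (hab : a ≤ b) (hf : ContinuousOn f (Icc a b))
    (hg : ContinuousOn g (Icc a b)) {t : ℝ} (ht : 0 < t) :
    ∫ s in a..b, |2 * f s * g s| ≤
      t * (∫ s in a..b, f s ^ 2) + t⁻¹ * ∫ s in a..b, g s ^ 2 := by
  have hf2 : IntervalIntegrable (fun s ↦ f s ^ 2) volume a b :=
    (hf.pow 2).intervalIntegrable_of_Icc hab
  have hg2 : IntervalIntegrable (fun s ↦ g s ^ 2) volume a b :=
    (hg.pow 2).intervalIntegrable_of_Icc hab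
  rw [← intervalIntegral.integral_const_mul, ← intervalIntegral.integral_const_mul,
    ← integral_add (hf2.const_mul t) (hg2.const_mul t⁻¹)]
  exact integral_mono_on hab
    (((continuousOn_const.mul hf).mul hg).intervalIntegrable_of_Icc hab).abs
    ((hf2.const_mul t).add (hg2.const_mul t⁻¹))
    fun s _ ↦ abs_two_mul_le_mul_sq_add_inv_mul_sq ht (f s) (g s)

theorem sq_le_integral_sq_add_integral_deriv_sq (hab : a < b)
    (hderiv : ∀ s ∈ Icc a b, HasDerivAt v (v' s) s) (hcont : ContinuousOn v' (Icc a b))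
    {r : ℝ} (hr : 0 < r) {c : ℝ} (hc : c ∈ Icc a b) :
    v c ^ 2 ≤ ((r + 1) / (b - a)) * (∫ s in a..b, v s ^ 2) +
      ((b - a) / r) * ∫ s in a..b, v' s ^ 2 := by
  have hba : 0 < b - a := sub_pos.2 hab
  have hv : ContinuousOn v (Icc a b) := HasDerivAt.continuousOn hderiv
  have hyoung := integral_abs_two_mul_le hab.le hv hcont (div_pos hr hba)
  have htrace := sq_le_integral_sq_div_add_integral_abs hab hderiv hcont hc
  rw [inv_div] at hyoung
  calc v c ^ 2 ≤ (∫ s in a..b, v s ^ 2) / (b - a) +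
        (r / (b - a) * (∫ s in a..b, v s ^ 2) + (b - a) / r * ∫ s in a..b, v' s ^ 2) := by
        linarith
    _ = _ := by ring

end Trace

/-- The `q`-dependent endpoint trace inequality of Section 3.2, obtained from
the one-dimensional multiplicative trace inequality and Young's inequality:
for `v` continuously differentiable on `[a, b]` (with derivative `v'`) and a
natural number `q ≥ 1`,
`v(a)² ≤ ((q+1)/(b−a)) ∫_a^b v² + ((b−a)/q) ∫_a^b v'²`,
and the same bound holds for `v(b)²`. -/
theorem stmt10 (a b : ℝ) (hab : a < b) (q : ℕ) (hq : 1 ≤ q) (v v' : ℝ → ℝ)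
    (hderiv : ∀ s ∈ Set.Icc a b, HasDerivAt v (v' s) s)
    (hcont : ContinuousOn v' (Set.Icc a b)) :
    (v a) ^ 2 ≤ (((q : ℝ) + 1) / (b - a)) * (∫ s in a..b, (v s) ^ 2) +
        ((b - a) / (q : ℝ)) * (∫ s in a..b, (v' s) ^ 2) ∧
      (v b) ^ 2 ≤ (((q : ℝ) + 1) / (b - a)) * (∫ s in a..b, (v s) ^ 2) +
        ((b - a) / (q : ℝ)) * (∫ s in a..b, (v' s) ^ 2) := by
  have hq' : (0 : ℝ) < q := by exact_mod_cast hq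
  exact ⟨sq_le_integral_sq_add_integral_deriv_sq hab hderiv hcont hq' (left_mem_Icc.2 hab.le),
    sq_le_integral_sq_add_integral_deriv_sq hab hderiv hcont hq' (right_mem_Icc.2 hab.le)⟩
end

section
/- For every d ≥ 1, every κ > 0, every point z ∈ ℝ^{d+1}, and every integer p ≥ 1, the polynomial quasi-Trefftz space QT^p(z) is a linear subspace of the space of real polynomials in d+1 variables, and its dimension (as a real vector space) equals binom(p + d, d) + binom(p − 1 + d, d). -/
/-- Iterated partial derivative of a multivariate polynomial: the `α`-th
partial derivative, for a multi-index `α`. -/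
noncomputable def mpderiv {n : ℕ} (α : Fin n → ℕ) :
    MvPolynomial (Fin n) ℝ →ₗ[ℝ] MvPolynomial (Fin n) ℝ :=
  ((List.finRange n).map
    (fun i => ((MvPolynomial.pderiv i :
        Derivation ℝ (MvPolynomial (Fin n) ℝ) (MvPolynomial (Fin n) ℝ)).toLinearMap) ^ (α i))).prod

/-- The heat operator `H v = ∂_t v − κ Σ_{j=1}^d ∂²_{x_j} v` acting on real
polynomials in the `d+1` variables `x_1, …, x_d, t` (indexed by `Fin (d+1)`,
the time variable being the last index). -/
noncomputable def heatOp (d : ℕ) (κ : ℝ) (v : MvPolynomial (Fin (d + 1)) ℝ) :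
    MvPolynomial (Fin (d + 1)) ℝ :=
  MvPolynomial.pderiv (Fin.last d) v -
    MvPolynomial.C κ * ∑ j : Fin d,
      MvPolynomial.pderiv j.castSucc (MvPolynomial.pderiv j.castSucc v)

/-- The polynomial quasi-Trefftz space `QT^p(z)`: polynomials of total degree
at most `p` all of whose partial derivatives of the image under the heat
operator, of order `|α| ≤ p − 2`, vanish at the point `z`. -/
def QTset (d : ℕ) (κ : ℝ) (z : Fin (d + 1) → ℝ) (p : ℕ) :
    Set (MvPolynomial (Fin (d + 1)) ℝ) :=
  {v | v.totalDegree ≤ p ∧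
    ∀ α : Fin (d + 1) → ℕ, (∑ i, α i) + 2 ≤ p →
      MvPolynomial.eval z (mpderiv α (heatOp d κ v)) = 0}

/-!
Translating by `z` turns `∂^α (H v)(z)` into `α!` times the `α`-th coefficient of `H v (· + z)`,
so `QT^p(z)` is the kernel of the linear map sending `v` (of degree `≤ p`) to the Taylor
coefficients of `H v` at `z` of order `< p - 1`. This map is onto, because `H` maps polynomials of
degree `< k + 1` onto those of degree `< k`: with `F` the `t`-antiderivative of `f`,
`H F = f - κ ΔF`, and `κ ΔF` has degree `< k - 1`, so induction on `k` applies. Rank–nullity gives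
`dim QT^p(z) = binom(p+d+1, d+1) - binom(p-1+d, d+1)`, and Pascal's rule, applied twice, finishes.
-/

open MvPolynomial Finsupp

namespace Finsupp

lemma ncard_degree_eq (n k : ℕ) :
    {s : Fin (n + 1) →₀ ℕ | s.degree = k}.ncard = (k + n).choose n := by
  have e : {s : Fin (n + 1) →₀ ℕ | s.degree = k} ≃ Sym (Fin (n + 1)) k :=
    (Equiv.subtypeEquivRight fun _ => Iff.rfl).trans (Sym.equivNatSum _ k).symm
  rw [← Nat.card_coe_set_eq, Nat.card_congr e, Nat.card_eq_fintype_card, Sym.card_sym_eq_choose,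
    Fintype.card_fin, add_right_comm, Nat.add_sub_cancel, add_comm, Nat.choose_symm_add]

lemma ncard_degree_lt (n k : ℕ) :
    {s : Fin (n + 1) →₀ ℕ | s.degree < k}.ncard = (k + n).choose (n + 1) := by
  induction k with
  | zero => simp
  | succ k ih =>
    have hsplit : {s : Fin (n + 1) →₀ ℕ | s.degree < k + 1} =
        {s | s.degree < k} ∪ {s | s.degree = k} := by
      ext s
      simp only [Set.mem_union, Set.mem_ofPred_eq]
      omega
    have hdisj : Disjoint {s : Fin (n + 1) →₀ ℕ | s.degree < k} {s | s.degree = k} :=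
      Set.disjoint_left.mpr fun _ hlt heq => hlt.ne heq
    rw [hsplit, Set.ncard_union_eq hdisj (finite_of_degree_lt k) (finite_of_degree_eq k), ih,
      ncard_degree_eq, add_right_comm, Nat.choose_succ_succ', add_comm]

instance {σ : Type*} [Finite σ] (k : ℕ) : Finite {s : σ →₀ ℕ | s.degree < k} :=
  (finite_of_degree_lt k).to_subtype

end Finsupp

namespace MvPolynomial

section DegreeLT

variable (σ R : Type*) [CommSemiring R]

/-- Unlike `restrictTotalDegree`, the bound is strict, so that `degreeLT σ R 0 = ⊥`. -/
noncomputable abbrev degreeLT (k : ℕ) : Submodule R (MvPolynomial σ R) :=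
  restrictSupport R {s : σ →₀ ℕ | s.degree < k}

instance [Finite σ] (k : ℕ) : Module.Finite R (degreeLT σ R k) :=
  .of_basis (basisRestrictSupport R _)

variable {σ R}

lemma degreeLT_zero : degreeLT σ R 0 = ⊥ := by
  ext q
  simp [mem_restrictSupport_iff]

lemma degreeLT_mono {k l : ℕ} (h : k ≤ l) : degreeLT σ R k ≤ degreeLT σ R l :=
  restrictSupport_mono R fun _ hs => lt_of_lt_of_le hs h

lemma mem_degreeLT_succ_iff {k : ℕ} {q : MvPolynomial σ R} :
    q ∈ degreeLT σ R (k + 1) ↔ q.totalDegree ≤ k := by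
  rw [← mem_restrictTotalDegree]
  simp only [degreeLT, restrictTotalDegree, Nat.lt_succ_iff]
  rfl

lemma mem_degreeLT_of_totalDegree_lt {k : ℕ} {q : MvPolynomial σ R} (h : q.totalDegree < k) :
    q ∈ degreeLT σ R k :=
  fun _ hs => (le_totalDegree hs).trans_lt h

lemma pderiv_mem_degreeLT {k : ℕ} {q : MvPolynomial σ R} (hq : q ∈ degreeLT σ R (k + 1))
    (i : σ) : pderiv i q ∈ degreeLT σ R k := by
  rw [mem_restrictSupport_iff] at hq ⊢
  intro s hs
  have hsi : s + single i 1 ∈ q.support := by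
    rw [Finset.mem_coe, mem_support_iff, coeff_pderiv] at hs
    exact mem_support_iff.mpr (left_ne_zero_of_mul hs)
  have := hq hsi
  simp only [Set.mem_ofPred_eq, map_add, degree_single] at this ⊢
  omega

lemma finrank_degreeLT (K : Type*) [Field K] (n k : ℕ) :
    Module.finrank K (degreeLT (Fin (n + 1)) K k) = (k + n).choose (n + 1) := by
  rw [Module.finrank_eq_nat_card_basis (basisRestrictSupport K _), Nat.card_coe_set_eq,
    ncard_degree_lt]

end DegreeLT

section TaylorShift

variable {σ R : Type*} [CommRing R]

noncomputable def taylorShift (z : σ → R) : MvPolynomial σ R →ₐ[R] MvPolynomial σ R :=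
  aeval fun i => X i + C (z i)

@[simp]
lemma taylorShift_X (z : σ → R) (i : σ) : taylorShift z (X i) = X i + C (z i) := aeval_X _ _

lemma taylorShift_taylorShift_neg (z : σ → R) (q : MvPolynomial σ R) :
    taylorShift z (taylorShift (-z) q) = q := by
  suffices (taylorShift z).comp (taylorShift (-z)) = AlgHom.id R _ from congr($this q)
  exact algHom_ext fun i => by simp

lemma constantCoeff_taylorShift (z : σ → R) (q : MvPolynomial σ R) :
    constantCoeff (taylorShift z q) = eval z q := by
  suffices constantCoeff.comp (taylorShift z : MvPolynomial σ R →+* MvPolynomial σ R) = eval z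
    from congr($this q)
  exact ringHom_ext (fun a => by simp [taylorShift]) fun i => by simp

lemma pderiv_taylorShift (z : σ → R) (i : σ) (q : MvPolynomial σ R) :
    pderiv i (taylorShift z q) = taylorShift z (pderiv i q) := by
  induction q using MvPolynomial.induction_on with
  | C a => simp [taylorShift]
  | add f g hf hg => simp [hf, hg]
  | mul_X f j hf => classical simp [hf, pderiv_X, Pi.single_apply, apply_ite]

lemma totalDegree_taylorShift_monomial_le (z : σ → R) (s : σ →₀ ℕ) :
    (taylorShift z (monomial s 1)).totalDegree ≤ s.degree := by
  rw [taylorShift, aeval_monomial, map_one, one_mul, Finsupp.prod]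
  refine (totalDegree_finsetProd _ _).trans (Finset.sum_le_sum fun i _ => ?_)
  refine (totalDegree_pow _ _).trans (mul_le_of_le_one_right (Nat.zero_le _) ?_)
  refine (totalDegree_add _ _).trans (max_le ?_ (by simp))
  exact (totalDegree_monomial_le (single i 1) 1).trans (by simp)

lemma taylorShift_mem_degreeLT (z : σ → R) {k : ℕ} {q : MvPolynomial σ R}
    (hq : q ∈ degreeLT σ R k) : taylorShift z q ∈ degreeLT σ R k := by
  suffices degreeLT σ R k ≤ (degreeLT σ R k).comap (taylorShift z).toLinearMap from this hq
  conv_lhs => rw [degreeLT, restrictSupport_eq_span]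
  rw [Submodule.span_le]
  rintro _ ⟨s, hs, rfl⟩
  exact mem_degreeLT_of_totalDegree_lt ((totalDegree_taylorShift_monomial_le z s).trans_lt hs)

end TaylorShift

section Antideriv

variable {σ K : Type*} [Field K]

noncomputable def antideriv (i : σ) (q : MvPolynomial σ K) : MvPolynomial σ K :=
  ∑ s ∈ q.support, monomial (s + single i 1) (coeff s q / (s i + 1))

lemma pderiv_antideriv [CharZero K] (i : σ) (q : MvPolynomial σ K) :
    pderiv i (antideriv i q) = q := by
  conv_rhs => rw [q.as_sum]
  simp only [antideriv, map_sum, pderiv_monomial, add_tsub_cancel_right]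
  refine Finset.sum_congr rfl fun s _ => ?_
  rw [Finsupp.add_apply, single_eq_same, Nat.cast_add_one,
    div_mul_cancel₀ _ (Nat.cast_add_one_ne_zero _)]

lemma antideriv_mem_degreeLT {k : ℕ} {q : MvPolynomial σ K} (hq : q ∈ degreeLT σ K k) (i : σ) :
    antideriv i q ∈ degreeLT σ K (k + 1) :=
  Submodule.sum_mem _ fun s hs => by
    rw [monomial_mem_restrictSupport]
    left
    simpa [Set.mem_ofPred_eq, map_add, degree_single] using hq hs

end Antideriv

section IteratedPDeriv

variable {σ R : Type*} [CommRing R]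

lemma pderiv_pow_monomial (i : σ) (k : ℕ) (s : σ →₀ ℕ) (c : R) :
    ((pderiv i).toLinearMap ^ k) (monomial s c) =
      monomial (s - single i k) (c * (s i).descFactorial k) := by
  induction k with
  | zero => simp
  | succ k ih =>
    rw [pow_succ', Module.End.mul_apply, ih, Derivation.coeFn_coe, pderiv_monomial,
      tsub_tsub, ← single_add, tsub_apply, single_eq_same, Nat.descFactorial_succ, Nat.cast_mul,
      mul_assoc, mul_comm ((s i - k : ℕ) : R)]

lemma list_prod_pderiv_pow_monomial (α : σ → ℕ) {l : List σ} (hl : l.Nodup) (s : σ →₀ ℕ)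
    (c : R) :
    (l.map fun i => (pderiv i).toLinearMap ^ α i).prod (monomial s c) =
      monomial (s - (l.map fun i => single i (α i)).sum)
        (c * (l.map fun i => ((s i).descFactorial (α i) : R)).prod) := by
  induction l with
  | nil => simp
  | cons i l ih =>
    obtain ⟨hi, hl⟩ := List.nodup_cons.mp hl
    have hsi : (s - (l.map fun j => single j (α j)).sum) i = s i := by
      rw [tsub_apply, ← applyAddHom_apply i (List.sum _), map_list_sum, List.map_map,
        List.sum_eq_zero, tsub_zero]
      simp only [List.mem_map, Function.comp_apply, applyAddHom_apply]
      rintro _ ⟨j, hj, rfl⟩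
      exact single_eq_of_ne (ne_of_mem_of_not_mem hj hi).symm
    rw [List.map_cons, List.prod_cons, Module.End.mul_apply, ih hl, pderiv_pow_monomial, hsi,
      tsub_tsub, List.map_cons, List.sum_cons, add_comm (single i (α i)), List.map_cons,
      List.prod_cons, mul_assoc, mul_comm ((s i).descFactorial (α i) : R)]

variable {n : ℕ}

lemma mpderiv_monomial (α : Fin n → ℕ) (s : Fin n →₀ ℕ) (c : ℝ) :
    mpderiv α (monomial s c) =
      monomial (s - equivFunOnFinite.symm α) (c * ∏ i, ((s i).descFactorial (α i) : ℝ)) := by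
  rw [mpderiv, list_prod_pderiv_pow_monomial α (List.nodup_finRange n), ← Fin.prod_univ_def,
    ← Fin.sum_univ_def, ← equivFunOnFinite_symm_eq_sum]

lemma constantCoeff_mpderiv (α : Fin n → ℕ) (q : MvPolynomial (Fin n) ℝ) :
    constantCoeff (mpderiv α q) =
      (∏ i, ((α i).factorial : ℝ)) * coeff (equivFunOnFinite.symm α) q := by
  induction q using induction_on' with
  | add f g hf hg => simp only [map_add, coeff_add, hf, hg, mul_add]
  | monomial s c =>
    rw [mpderiv_monomial, constantCoeff_monomial, coeff_monomial]
    by_cases hs : s = equivFunOnFinite.symm α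
    · subst hs
      simp [Nat.descFactorial_self, mul_comm]
    · rw [if_neg hs, mul_zero, ite_eq_right_iff]
      intro hle
      obtain ⟨i, hi⟩ : ∃ i, s i < α i := by
        by_contra! h
        exact hs (le_antisymm (tsub_eq_zero_iff_le.mp hle) fun i => h i)
      simp [Finset.prod_eq_zero (Finset.mem_univ i), Nat.descFactorial_eq_zero_iff_lt.mpr hi]

lemma taylorShift_mpderiv (z : Fin n → ℝ) (α : Fin n → ℕ) (q : MvPolynomial (Fin n) ℝ) :
    taylorShift z (mpderiv α q) = mpderiv α (taylorShift z q) := by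
  have hcomm : Commute (taylorShift z).toLinearMap (mpderiv α) :=
    Commute.list_prod_right _ _ fun _ hf => by
      obtain ⟨i, -, rfl⟩ := List.mem_map.mp hf
      exact (show Commute _ _ from
        LinearMap.ext fun q => (pderiv_taylorShift z i q).symm).pow_right _
  exact congr($hcomm q)

lemma eval_mpderiv (z : Fin n → ℝ) (α : Fin n → ℕ) (q : MvPolynomial (Fin n) ℝ) :
    eval z (mpderiv α q) =
      (∏ i, ((α i).factorial : ℝ)) * coeff (equivFunOnFinite.symm α) (taylorShift z q) := by
  rw [← constantCoeff_taylorShift, taylorShift_mpderiv, constantCoeff_mpderiv]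

end IteratedPDeriv

end MvPolynomial

section Heat

variable (d : ℕ) (κ : ℝ)

lemma heatOp_add (v w : MvPolynomial (Fin (d + 1)) ℝ) :
    heatOp d κ (v + w) = heatOp d κ v + heatOp d κ w := by
  simp only [heatOp, map_add, Finset.sum_add_distrib]
  ring

noncomputable def heatOpₗ : MvPolynomial (Fin (d + 1)) ℝ →ₗ[ℝ] MvPolynomial (Fin (d + 1)) ℝ where
  toFun := heatOp d κ
  map_add' := heatOp_add d κ
  map_smul' c v := by
    simp only [heatOp, Derivation.map_smul, RingHom.id_apply, smul_sub, ← Finset.smul_sum,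
      mul_smul_comm]

theorem exists_heatOp_eq {k : ℕ} {f : MvPolynomial (Fin (d + 1)) ℝ}
    (hf : f ∈ degreeLT _ ℝ k) : ∃ w ∈ degreeLT _ ℝ (k + 1), heatOp d κ w = f := by
  induction k generalizing f with
  | zero =>
    rw [degreeLT_zero, Submodule.mem_bot] at hf
    exact ⟨0, zero_mem _, by simp [hf, heatOp]⟩
  | succ k ih =>
    set F := antideriv (Fin.last d) f
    have hF : F ∈ degreeLT _ ℝ (k + 2) := antideriv_mem_degreeLT hf _
    obtain ⟨w, hw, hHw⟩ := ih (f := C κ * ∑ j : Fin d, pderiv j.castSucc (pderiv j.castSucc F)) (by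
      rw [C_mul']
      exact Submodule.smul_mem _ _ (Submodule.sum_mem _ fun j _ =>
        pderiv_mem_degreeLT (pderiv_mem_degreeLT hF _) _))
    refine ⟨F + w, add_mem hF (degreeLT_mono (by omega) hw), ?_⟩
    rw [heatOp_add, hHw, heatOp, pderiv_antideriv, sub_add_cancel]

variable (z : Fin (d + 1) → ℝ)

noncomputable def heatJet (m k : ℕ) :
    degreeLT (Fin (d + 1)) ℝ m →ₗ[ℝ] ({s : Fin (d + 1) →₀ ℕ | s.degree < k} → ℝ) :=
  LinearMap.pi fun s =>
    lcoeff ℝ s.1 ∘ₗ (taylorShift z).toLinearMap ∘ₗ heatOpₗ d κ ∘ₗ Submodule.subtype _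

lemma heatJet_apply (m k : ℕ) (v : degreeLT (Fin (d + 1)) ℝ m)
    (s : {s : Fin (d + 1) →₀ ℕ | s.degree < k}) :
    heatJet d κ z m k v s = coeff s.1 (taylorShift z (heatOp d κ v)) :=
  rfl

theorem heatJet_surjective {m k : ℕ} (h : k < m) : Function.Surjective (heatJet d κ z m k) := by
  intro c
  set g := (basisRestrictSupport ℝ {s : Fin (d + 1) →₀ ℕ | s.degree < k}).equivFun.symm c
  obtain ⟨w, hw, hHw⟩ := exists_heatOp_eq d κ (taylorShift_mem_degreeLT (-z) g.2)
  refine ⟨⟨w, degreeLT_mono h hw⟩, funext fun s => ?_⟩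
  rw [heatJet_apply, hHw, taylorShift_taylorShift_neg,
    ← congr_fun ((basisRestrictSupport ℝ _).equivFun.apply_symm_apply c) s]
  rfl

theorem QTset_eq_map_ker (p : ℕ) :
    QTset d κ z p = (heatJet d κ z (p + 1) (p - 1)).ker.map (Submodule.subtype _) := by
  have hfact (α : Fin (d + 1) → ℕ) : (∏ i, ((α i).factorial : ℝ)) ≠ 0 :=
    Finset.prod_ne_zero_iff.mpr fun i _ => Nat.cast_ne_zero.mpr (Nat.factorial_ne_zero _)
  ext v
  rw [SetLike.mem_coe, Submodule.mem_map]
  constructor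
  · rintro ⟨hdeg, hH⟩
    refine ⟨⟨v, mem_degreeLT_succ_iff.mpr hdeg⟩, funext fun s => ?_, rfl⟩
    have := hH s.1 (by have := s.2; simp only [Set.mem_ofPred_eq, degree_eq_sum] at this; omega)
    rwa [eval_mpderiv, equivFunOnFinite_symm_coe, mul_eq_zero, or_iff_right (hfact _)] at this
  · rintro ⟨v, hker, rfl⟩
    refine ⟨mem_degreeLT_succ_iff.mp v.2, fun α hα => ?_⟩
    have hs : (equivFunOnFinite.symm α).degree < p - 1 := by
      rw [degree_eq_sum]
      simp only [coe_equivFunOnFinite_symm]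
      omega
    rw [Submodule.subtype_apply, eval_mpderiv, ← heatJet_apply d κ z (p + 1) (p - 1) v ⟨_, hs⟩,
      congr_fun hker, Pi.zero_apply, mul_zero]

end Heat

theorem stmt11_general (d : ℕ) (κ : ℝ)
    (z : Fin (d + 1) → ℝ) (p : ℕ) (hp : 1 ≤ p) :
    ∃ S : Submodule ℝ (MvPolynomial (Fin (d + 1)) ℝ),
      (S : Set (MvPolynomial (Fin (d + 1)) ℝ)) = QTset d κ z p ∧
      Module.finrank ℝ S = (p + d).choose d + (p - 1 + d).choose d := by
  refine ⟨(heatJet d κ z (p + 1) (p - 1)).ker.map (Submodule.subtype _),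
    (QTset_eq_map_ker d κ z p).symm, ?_⟩
  have hrank := LinearMap.finrank_range_add_finrank_ker (heatJet d κ z (p + 1) (p - 1))
  rw [LinearMap.range_eq_top.mpr (heatJet_surjective d κ z (by omega)), finrank_top,
    ← (basisRestrictSupport ℝ _).equivFun.finrank_eq, finrank_degreeLT, finrank_degreeLT] at hrank
  rw [Submodule.finrank_map_subtype_eq]
  obtain ⟨q, rfl⟩ : ∃ q, p = q + 1 := ⟨p - 1, by omega⟩
  have h1 := Nat.choose_succ_succ' (q + 1 + d) d
  have h2 := Nat.choose_succ_succ' (q + d) d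
  simp only [Nat.add_sub_cancel] at hrank ⊢
  rw [show q + 1 + 1 + d = q + 1 + d + 1 by omega, show q + 1 + d = q + d + 1 by omega] at *
  omega

/-- Dimension of the quasi-Trefftz space (eq. (5.2) of the paper): for every
`d ≥ 1`, `κ > 0`, `z ∈ ℝ^{d+1}` and integer `p ≥ 1`, the set `QT^p(z)` is a
linear subspace of the space of real polynomials in `d+1` variables, of
dimension `binom(p+d, d) + binom(p−1+d, d)`. -/
theorem stmt11 (d : ℕ) (hd : 1 ≤ d) (κ : ℝ) (hκ : 0 < κ)
    (z : Fin (d + 1) → ℝ) (p : ℕ) (hp : 1 ≤ p) :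
    ∃ S : Submodule ℝ (MvPolynomial (Fin (d + 1)) ℝ),
      (S : Set (MvPolynomial (Fin (d + 1)) ℝ)) = QTset d κ z p ∧
      Module.finrank ℝ S = (p + d).choose d + (p - 1 + d).choose d :=
  stmt11_general d κ z p hp
end

section
/- For every d ≥ 1, κ > 0, z = (z_1, …, z_{d+1}) ∈ ℝ^{d+1}, and integer p ≥ 1, the following holds: for every pair of real polynomials (g_0, g_1) in the d variables x_2, …, x_d, t with total degree of g_0 at most p and total degree of g_1 at most p − 1, there exists a unique polynomial v ∈ QT^p(z) such that substituting x_1 := z_1 in v yields g_0 and substituting x_1 := z_1 in ∂v/∂x_1 yields g_1. Equivalently, the linear map v ↦ (v|_{x_1 = z_1}, (∂v/∂x_1)|_{x_1 = z_1}) restricted to QT^p(z) is a bijection onto the product of these two polynomial spaces. -/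
/-- Substitution `x_1 := c` into a polynomial in the variables `x_1, …, x_d, t`,
yielding a polynomial in the remaining `d` variables `x_2, …, x_d, t`. -/
noncomputable def substX1 (d : ℕ) (c : ℝ) :
    MvPolynomial (Fin (d + 1)) ℝ →ₐ[ℝ] MvPolynomial (Fin d) ℝ :=
  MvPolynomial.aeval
    (Fin.cases (MvPolynomial.C c) (fun j : Fin d => MvPolynomial.X j))

/-!
Translating by `z` (the Taylor shift `q ↦ q(X + z)`) commutes with all partial derivatives and
preserves total degree, so it suffices to treat `z = 0`. There the quasi-Trefftz conditions say
that the coefficients of `H v` of total degree at most `p - 2` vanish. Writing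
`v = ∑ₖ x₁ᵏ vₖ` with `vₖ` polynomials in the other variables, the coefficient of `x₁ᵏ` in `H v`
is `H' vₖ - κ (k + 1) (k + 2) vₖ₊₂`, where `H'` is the heat operator in the remaining variables.
Hence `v₀ = g₀` and `v₁ = g₁` determine every `vₖ₊₂` up to the degree bound, and the degree
bound forces all other coefficients to vanish.
-/

open MvPolynomial

namespace Finsupp

lemma cons_add_cons {n : ℕ} {M : Type*} [AddZeroClass M] (a b : M) (s t : Fin n →₀ M) :
    cons a s + cons b t = cons (a + b) (s + t) := by
  ext j
  cases j using Fin.cases <;> simp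

lemma degree_cons {n : ℕ} {M : Type*} [AddCommMonoid M] (b : M) (δ : Fin n →₀ M) :
    (cons b δ).degree = b + δ.degree := by
  simp [degree_eq_sum, Fin.sum_univ_succ]

end Finsupp

lemma Polynomial.exists_coeff_eq_of_eq_zero_of_lt {A : Type*} [Semiring A] {f : ℕ → A} {N : ℕ}
    (hf : ∀ k, N < k → f k = 0) : ∃ P : Polynomial A, ∀ k, P.coeff k = f k := by
  refine ⟨∑ k ∈ Finset.range (N + 1), monomial k (f k), fun k => ?_⟩
  simp only [finsetSum_coeff, coeff_monomial, Finset.sum_ite_eq', Finset.mem_range]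
  split_ifs with hk
  · rfl
  · exact (hf k (by omega)).symm

namespace MvPolynomial

section CommSemiring

variable {σ R : Type*} [CommSemiring R]

lemma degree_le_totalDegree_of_coeff_ne_zero {q : MvPolynomial σ R} {γ : σ →₀ ℕ}
    (h : coeff γ q ≠ 0) : γ.degree ≤ q.totalDegree :=
  le_totalDegree (mem_support_iff.mpr h)

lemma totalDegree_aeval_le {τ : Type*} (f : σ → MvPolynomial τ R)
    (hf : ∀ i, (f i).totalDegree ≤ 1) (q : MvPolynomial σ R) :
    (aeval f q).totalDegree ≤ q.totalDegree := by
  conv_lhs => rw [q.as_sum, map_sum]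
  refine (totalDegree_finsetSum _ _).trans (Finset.sup_le fun u hu => ?_)
  rw [aeval_monomial, ← C_eq_algebraMap]
  refine (totalDegree_mul _ _).trans ?_
  rw [totalDegree_C, zero_add]
  refine (totalDegree_finsetProd _ _).trans
    ((Finset.sum_le_sum fun i _ => ?_).trans (le_totalDegree hu))
  exact (totalDegree_pow _ _).trans (by simpa using Nat.mul_le_mul_left (u i) (hf i))

lemma totalDegree_X_add_C_le (i : σ) (c : R) : (X i + C c : MvPolynomial σ R).totalDegree ≤ 1 :=
  (totalDegree_add _ _).trans <|
    max_le ((totalDegree_monomial_le (Finsupp.single i 1) 1).trans (by simp)) (by simp)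

lemma coeff_pderiv_pow (i : σ) (k : ℕ) (q : MvPolynomial σ R) (m : σ →₀ ℕ) :
    coeff m (((pderiv i).toLinearMap ^ k) q) =
      coeff (m + Finsupp.single i k) q * (m i + k).descFactorial k := by
  induction k generalizing q with
  | zero => simp
  | succ k ih =>
    rw [pow_succ, Module.End.mul_apply, ih, Derivation.coeFn_coe, coeff_pderiv,
      add_assoc, ← Finsupp.single_add, ← add_assoc (m i), Nat.succ_descFactorial_succ]
    simp only [Finsupp.coe_add, Pi.add_apply, Finsupp.single_eq_same, Nat.cast_add,
      Nat.cast_mul, Nat.cast_one]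
    ring

noncomputable def truncTotalDegree (m : ℕ) (q : MvPolynomial σ R) : MvPolynomial σ R :=
  ∑ j ∈ Finset.range m, homogeneousComponent j q

lemma coeff_truncTotalDegree (m : ℕ) (q : MvPolynomial σ R) (γ : σ →₀ ℕ) :
    coeff γ (truncTotalDegree m q) = if γ.degree < m then coeff γ q else 0 := by
  simp [truncTotalDegree, coeff_sum, coeff_homogeneousComponent]

end CommSemiring

section TaylorShift

variable {σ R : Type*} [CommRing R]

noncomputable def taylor (z : σ → R) : MvPolynomial σ R ≃ₐ[R] MvPolynomial σ R :=
  AlgEquiv.ofAlgHom (aeval fun i => X i + C (z i)) (aeval fun i => X i - C (z i))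
    (by ext; simp) (by ext; simp)

@[simp]
lemma taylor_X (z : σ → R) (i : σ) : taylor z (X i) = X i + C (z i) := by
  simp [taylor]

@[simp]
lemma taylor_C (z : σ → R) (r : R) : taylor z (C r) = C r :=
  (taylor z).commutes r

lemma taylor_symm (z : σ → R) : (taylor z).symm = taylor (-z) :=
  AlgEquiv.coe_toAlgHom_injective <| algHom_ext fun i => by simp [taylor, sub_eq_add_neg]

lemma eval_taylor (x z : σ → R) (q : MvPolynomial σ R) :
    eval x (taylor z q) = eval (x + z) q := by
  induction q using MvPolynomial.induction_on with
  | C a => simp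
  | add p q hp hq => simp [hp, hq]
  | mul_X p j hp => simp [hp]

lemma pderiv_taylor (z : σ → R) (i : σ) (q : MvPolynomial σ R) :
    pderiv i (taylor z q) = taylor z (pderiv i q) := by
  classical
  induction q using MvPolynomial.induction_on with
  | C a => simp
  | add p q hp hq => simp [hp, hq]
  | mul_X p j hp => simp [hp, pderiv_X, Pi.single_apply, apply_ite (taylor z)]

lemma totalDegree_taylor_le (z : σ → R) (q : MvPolynomial σ R) :
    (taylor z q).totalDegree ≤ q.totalDegree :=
  totalDegree_aeval_le _ (fun i => totalDegree_X_add_C_le i (z i)) q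

lemma totalDegree_taylor (z : σ → R) (q : MvPolynomial σ R) :
    (taylor z q).totalDegree = q.totalDegree := by
  refine (totalDegree_taylor_le z q).antisymm ?_
  simpa [← taylor_symm] using totalDegree_taylor_le (-z) (taylor z q)

end TaylorShift

end MvPolynomial

section MultiIndexDerivative

variable {n : ℕ}

lemma mpderiv_taylor (z : Fin n → ℝ) (α : Fin n → ℕ) (q : MvPolynomial (Fin n) ℝ) :
    mpderiv α (taylor z q) = taylor z (mpderiv α q) := by
  have hcomm : Commute (taylor z).toLinearMap (mpderiv α) := by
    refine Commute.list_prod_right _ _ fun D hD => ?_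
    obtain ⟨i, -, rfl⟩ := List.mem_map.mp hD
    exact Commute.pow_right (LinearMap.ext fun q => (pderiv_taylor z i q).symm) _
  exact (LinearMap.congr_fun hcomm q).symm

lemma coeff_list_prod_pderiv_pow (α : Fin n → ℕ) {l : List (Fin n)} (hl : l.Nodup)
    (q : MvPolynomial (Fin n) ℝ) (m : Fin n →₀ ℕ) :
    coeff m ((l.map fun i => (pderiv i).toLinearMap ^ α i).prod q) =
      coeff (m + (l.map fun i => Finsupp.single i (α i)).sum) q *
        (l.map fun i => ((m i + α i).descFactorial (α i) : ℝ)).prod := by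
  induction l generalizing m with
  | nil => simp
  | cons i t ih =>
    obtain ⟨hit, ht⟩ := List.nodup_cons.mp hl
    have hprod : (t.map fun j => (((m + Finsupp.single i (α i)) j + α j).descFactorial (α j) : ℝ))
        = t.map fun j => ((m j + α j).descFactorial (α j) : ℝ) :=
      List.map_congr_left fun j hj => by simp [(ne_of_mem_of_not_mem hj hit).symm]
    rw [List.map_cons, List.prod_cons, Module.End.mul_apply, coeff_pderiv_pow, ih ht, hprod]
    simp only [List.map_cons, List.sum_cons, List.prod_cons, add_assoc]
    ring

lemma eval_zero_mpderiv (α : Fin n → ℕ) (q : MvPolynomial (Fin n) ℝ) :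
    eval 0 (mpderiv α q) =
      coeff (Finsupp.equivFunOnFinite.symm α) q * ∏ i, ((α i).factorial : ℝ) := by
  have hα : ((List.finRange n).map fun i => Finsupp.single i (α i)).sum =
      Finsupp.equivFunOnFinite.symm α := by
    ext j
    simp [← Fin.sum_univ_def, Finsupp.single_apply]
  rw [eval_zero, constantCoeff_eq, mpderiv, coeff_list_prod_pderiv_pow α (List.nodup_finRange n),
    hα, ← Fin.prod_univ_def]
  simp [Nat.descFactorial_self]

end MultiIndexDerivative

lemma heatOp_taylor (d : ℕ) (κ : ℝ) (z : Fin (d + 1) → ℝ) (v : MvPolynomial (Fin (d + 1)) ℝ) :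
    heatOp d κ (taylor z v) = taylor z (heatOp d κ v) := by
  simp [heatOp, pderiv_taylor]

lemma coeff_heatOp (d : ℕ) (κ : ℝ) (w : MvPolynomial (Fin (d + 1)) ℝ) (γ : Fin (d + 1) →₀ ℕ) :
    coeff γ (heatOp d κ w) =
      coeff (γ + Finsupp.single (Fin.last d) 1) w * (γ (Fin.last d) + 1) -
        κ * ∑ j : Fin d, coeff (γ + Finsupp.single j.castSucc 2) w *
          ((γ j.castSucc + 1) * (γ j.castSucc + 2)) := by
  have hsq (j : Fin (d + 1)) : pderiv j (pderiv j w) = ((pderiv j).toLinearMap ^ 2) w := by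
    rw [pow_two, Module.End.mul_apply]
    rfl
  simp only [heatOp, coeff_sub, coeff_C_mul, coeff_sum, coeff_pderiv, hsq, coeff_pderiv_pow]
  simp [Nat.descFactorial]

lemma coeff_cons_heatOp (d : ℕ) (κ : ℝ) (w : MvPolynomial (Fin (d + 1 + 1)) ℝ) (b : ℕ)
    (δ : Fin (d + 1) →₀ ℕ) :
    coeff (Finsupp.cons b δ) (heatOp (d + 1) κ w) =
      coeff δ (heatOp d κ ((finSuccEquiv ℝ (d + 1) w).coeff b)) -
        κ * ((b + 1) * (b + 2)) * coeff (Finsupp.cons (b + 2) δ) w := by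
  simp only [coeff_heatOp, finSuccEquiv_coeff_coeff, ← Fin.succ_last, Fin.sum_univ_succ,
    Fin.castSucc_zero, ← Fin.succ_castSucc, ← Finsupp.cons_zero_single_eq_single_succ,
    ← Finsupp.cons_zero_eq_single_zero, Finsupp.cons_add_cons, Finsupp.cons_zero,
    Finsupp.cons_succ, add_zero]
  ring

lemma mem_QTset_iff_taylor (d : ℕ) (κ : ℝ) (z : Fin (d + 1) → ℝ) (p : ℕ)
    (v : MvPolynomial (Fin (d + 1)) ℝ) :
    v ∈ QTset d κ z p ↔ taylor z v ∈ QTset d κ 0 p := by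
  simp only [QTset, Set.mem_ofPred_eq, totalDegree_taylor, heatOp_taylor, mpderiv_taylor,
    eval_taylor, zero_add]

lemma mem_QTset_zero_iff (d : ℕ) (κ : ℝ) (p : ℕ) (v : MvPolynomial (Fin (d + 1)) ℝ) :
    v ∈ QTset d κ 0 p ↔ v.totalDegree ≤ p ∧
      ∀ γ : Fin (d + 1) →₀ ℕ, γ.degree + 2 ≤ p → coeff γ (heatOp d κ v) = 0 := by
  refine and_congr_right fun _ => ⟨fun h γ hγ => ?_, fun h α hα => ?_⟩
  · have hγ' := h γ (by rwa [← Finsupp.degree_eq_sum])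
    rw [eval_zero_mpderiv, Finsupp.equivFunOnFinite_symm_coe] at hγ'
    exact (mul_eq_zero.mp hγ').resolve_right (by positivity)
  · rw [eval_zero_mpderiv, h _ (by simpa [Finsupp.degree_eq_sum] using hα), zero_mul]

section Trace

variable {n : ℕ}

lemma substX1_eq_eval_finSuccEquiv (c : ℝ) (w : MvPolynomial (Fin (n + 1)) ℝ) :
    substX1 n c w = Polynomial.eval (C c) (finSuccEquiv ℝ n w) := by
  have h : substX1 n c =
      ((Polynomial.aeval (C c)).restrictScalars ℝ).comp (finSuccEquiv ℝ n).toAlgHom := by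
    refine algHom_ext fun i => ?_
    cases i using Fin.cases <;> simp [substX1, finSuccEquiv_X_zero, finSuccEquiv_X_succ]
  rw [h]
  rfl

lemma coeff_substX1_zero (w : MvPolynomial (Fin (n + 1)) ℝ) (δ : Fin n →₀ ℕ) :
    coeff δ (substX1 n 0 w) = coeff (Finsupp.cons 0 δ) w := by
  rw [substX1_eq_eval_finSuccEquiv, C_0, ← Polynomial.coeff_zero_eq_eval_zero,
    finSuccEquiv_coeff_coeff]

lemma coeff_substX1_zero_pderiv_zero (w : MvPolynomial (Fin (n + 1)) ℝ) (δ : Fin n →₀ ℕ) :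
    coeff δ (substX1 n 0 (pderiv 0 w)) = coeff (Finsupp.cons 1 δ) w := by
  simp [coeff_substX1_zero, coeff_pderiv, ← Finsupp.cons_zero_eq_single_zero,
    Finsupp.cons_add_cons]

lemma substX1_taylor (z : Fin (n + 1) → ℝ) (q : MvPolynomial (Fin (n + 1)) ℝ) :
    substX1 n 0 (taylor z q) = taylor (z ∘ Fin.succ) (substX1 n (z 0) q) := by
  have h : (substX1 n 0).comp (taylor z).toAlgHom =
      (taylor (z ∘ Fin.succ)).toAlgHom.comp (substX1 n (z 0)) := by
    refine algHom_ext fun i => ?_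
    cases i using Fin.cases <;> simp [substX1]
  exact AlgHom.congr_fun h q

end Trace

section Slices

variable (d : ℕ) (κ : ℝ) (p : ℕ) (g₀ g₁ : MvPolynomial (Fin (d + 1)) ℝ)

/-- The coefficient `vₖ` of `x₁ᵏ` in the quasi-Trefftz polynomial with traces `g₀, g₁`; the
truncation enforces `deg (x₁ᵏ⁺² vₖ₊₂) ≤ p`. -/
noncomputable def qtSlice : ℕ → MvPolynomial (Fin (d + 1)) ℝ
  | 0 => g₀
  | 1 => g₁
  | k + 2 => truncTotalDegree (p + 1 - (k + 2))
      ((κ * ((k + 1) * (k + 2)))⁻¹ • heatOp d κ (qtSlice k))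

lemma coeff_qtSlice_add_two (k : ℕ) (δ : Fin (d + 1) →₀ ℕ) :
    coeff δ (qtSlice d κ p g₀ g₁ (k + 2)) =
      if k + 2 + δ.degree ≤ p then
        coeff δ (heatOp d κ (qtSlice d κ p g₀ g₁ k)) / (κ * ((k + 1) * (k + 2)))
      else 0 := by
  rw [qtSlice, coeff_truncTotalDegree, coeff_smul, smul_eq_mul, inv_mul_eq_div]
  exact if_congr (by omega) rfl rfl

variable {d κ p g₀ g₁}

lemma add_degree_le_of_coeff_qtSlice_ne_zero (hp : 1 ≤ p) (h₀ : g₀.totalDegree ≤ p)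
    (h₁ : g₁.totalDegree ≤ p - 1) {k : ℕ} {δ : Fin (d + 1) →₀ ℕ}
    (h : coeff δ (qtSlice d κ p g₀ g₁ k) ≠ 0) : k + δ.degree ≤ p := by
  match k with
  | 0 | 1 =>
    have := degree_le_totalDegree_of_coeff_ne_zero h
    simp only [qtSlice] at this
    omega
  | k + 2 =>
    rw [coeff_qtSlice_add_two] at h
    by_contra hk
    exact h (if_neg hk)

lemma qtSlice_eq_zero_of_lt (hp : 1 ≤ p) (h₀ : g₀.totalDegree ≤ p)
    (h₁ : g₁.totalDegree ≤ p - 1) {k : ℕ} (hk : p < k) : qtSlice d κ p g₀ g₁ k = 0 := by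
  ext δ
  by_contra h
  have := add_degree_le_of_coeff_qtSlice_ne_zero hp h₀ h₁ h
  omega

lemma finSuccEquiv_coeff_eq_qtSlice (hκ : κ ≠ 0) {w : MvPolynomial (Fin (d + 1 + 1)) ℝ}
    (hw : w ∈ QTset (d + 1) κ 0 p) (h₀ : substX1 (d + 1) 0 w = g₀)
    (h₁ : substX1 (d + 1) 0 (pderiv 0 w) = g₁) (k : ℕ) :
    (finSuccEquiv ℝ (d + 1) w).coeff k = qtSlice d κ p g₀ g₁ k := by
  obtain ⟨hdeg, hheat⟩ := (mem_QTset_zero_iff _ _ _ _).mp hw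
  induction k using Nat.twoStepInduction with
  | zero => ext δ; rw [finSuccEquiv_coeff_coeff, ← coeff_substX1_zero, h₀]; rfl
  | one => ext δ; rw [finSuccEquiv_coeff_coeff, ← coeff_substX1_zero_pderiv_zero, h₁]; rfl
  | more k ih _ =>
    ext δ
    rw [finSuccEquiv_coeff_coeff, coeff_qtSlice_add_two]
    split_ifs with hk
    · have hH := hheat (Finsupp.cons k δ) (by rw [Finsupp.degree_cons]; omega)
      rw [coeff_cons_heatOp, ih] at hH
      have : κ * ((k + 1) * (k + 2)) ≠ 0 := by positivity
      field_simp
      linarith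
    · by_contra hc
      have := (degree_le_totalDegree_of_coeff_ne_zero hc).trans hdeg
      rw [Finsupp.degree_cons] at this
      omega

lemma mem_QTset_of_finSuccEquiv_coeff_eq_qtSlice (hκ : κ ≠ 0) (hp : 1 ≤ p)
    (h₀ : g₀.totalDegree ≤ p) (h₁ : g₁.totalDegree ≤ p - 1)
    {w : MvPolynomial (Fin (d + 1 + 1)) ℝ}
    (hw : ∀ k, (finSuccEquiv ℝ (d + 1) w).coeff k = qtSlice d κ p g₀ g₁ k) :
    w ∈ QTset (d + 1) κ 0 p ∧ substX1 (d + 1) 0 w = g₀ ∧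
      substX1 (d + 1) 0 (pderiv 0 w) = g₁ := by
  have hcoeff (b : ℕ) (δ : Fin (d + 1) →₀ ℕ) :
      coeff (Finsupp.cons b δ) w = coeff δ (qtSlice d κ p g₀ g₁ b) := by
    rw [← finSuccEquiv_coeff_coeff, hw]
  refine ⟨(mem_QTset_zero_iff _ _ _ _).mpr ⟨?_, fun γ hγ => ?_⟩, ?_, ?_⟩
  · refine Finset.sup_le fun γ hγ => ?_
    rw [mem_support_iff, ← Finsupp.cons_tail γ, hcoeff] at hγ
    show γ.degree ≤ p
    rw [← Finsupp.cons_tail γ, Finsupp.degree_cons]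
    exact add_degree_le_of_coeff_qtSlice_ne_zero hp h₀ h₁ hγ
  · rw [← Finsupp.cons_tail γ, Finsupp.degree_cons] at hγ
    rw [← Finsupp.cons_tail γ, coeff_cons_heatOp, hw, hcoeff, coeff_qtSlice_add_two,
      if_pos (by omega)]
    have : κ * ((γ 0 + 1) * (γ 0 + 2)) ≠ 0 := by positivity
    field_simp
    ring
  · ext δ
    rw [coeff_substX1_zero, hcoeff]
    rfl
  · ext δ
    rw [coeff_substX1_zero_pderiv_zero, hcoeff]
    rfl

theorem existsUnique_mem_QTset_zero (hκ : κ ≠ 0) (hp : 1 ≤ p) (h₀ : g₀.totalDegree ≤ p)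
    (h₁ : g₁.totalDegree ≤ p - 1) :
    ∃! w : MvPolynomial (Fin (d + 1 + 1)) ℝ, w ∈ QTset (d + 1) κ 0 p ∧
      substX1 (d + 1) 0 w = g₀ ∧ substX1 (d + 1) 0 (pderiv 0 w) = g₁ := by
  obtain ⟨P, hP⟩ := Polynomial.exists_coeff_eq_of_eq_zero_of_lt
    (fun _ hk => qtSlice_eq_zero_of_lt hp h₀ h₁ hk)
  refine ⟨(finSuccEquiv ℝ (d + 1)).symm P,
    mem_QTset_of_finSuccEquiv_coeff_eq_qtSlice hκ hp h₀ h₁ (by simpa using hP), ?_⟩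
  rintro w ⟨hw, hw₀, hw₁⟩
  rw [AlgEquiv.eq_symm_apply]
  ext k : 1
  rw [hP, finSuccEquiv_coeff_eq_qtSlice hκ hw hw₀ hw₁]

end Slices

/-- Quasi-Trefftz basis construction (Appendix A of the paper): for every
`d ≥ 1`, `κ > 0`, `z ∈ ℝ^{d+1}` and integer `p ≥ 1`, and for every pair of
polynomials `g_0, g_1` in the `d` variables `x_2, …, x_d, t` of total degrees
at most `p` and `p − 1` respectively, there is a unique `v ∈ QT^p(z)` such
that substituting `x_1 := z_1` in `v` yields `g_0` and substituting
`x_1 := z_1` in `∂v/∂x_1` yields `g_1`; i.e. the map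
`v ↦ (v|_{x_1 = z_1}, (∂v/∂x_1)|_{x_1 = z_1})` restricted to `QT^p(z)` is a
bijection onto the product of these two polynomial spaces. -/
theorem stmt12 (d : ℕ) (hd : 1 ≤ d) (κ : ℝ) (hκ : 0 < κ)
    (z : Fin (d + 1) → ℝ) (p : ℕ) (hp : 1 ≤ p) :
    ∀ g₀ g₁ : MvPolynomial (Fin d) ℝ,
      g₀.totalDegree ≤ p → g₁.totalDegree ≤ p - 1 →
      ∃! v : MvPolynomial (Fin (d + 1)) ℝ,
        v ∈ QTset d κ z p ∧
        substX1 d (z 0) v = g₀ ∧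
        substX1 d (z 0) (MvPolynomial.pderiv (0 : Fin (d + 1)) v) = g₁ := by
  obtain ⟨d, rfl⟩ : ∃ e, d = e + 1 := ⟨d - 1, by omega⟩
  intro g₀ g₁ h₀ h₁
  have htrace (v : MvPolynomial (Fin (d + 1 + 1)) ℝ) (g : MvPolynomial (Fin (d + 1)) ℝ) :
      substX1 (d + 1) (z 0) v = g ↔
        substX1 (d + 1) 0 (taylor z v) = taylor (z ∘ Fin.succ) g := by
    rw [substX1_taylor, (taylor _).injective.eq_iff]
  refine ((taylor z).toEquiv.existsUnique_congr fun v => ?_).mpr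
    (existsUnique_mem_QTset_zero hκ.ne' hp (g₀ := taylor (z ∘ Fin.succ) g₀)
      (g₁ := taylor (z ∘ Fin.succ) g₁) (by rwa [totalDegree_taylor])
      (by rwa [totalDegree_taylor]))
  rw [mem_QTset_iff_taylor, htrace, htrace, ← pderiv_taylor]
  rfl
end

section
/- For all real constants C_inv > 0 and C_tr > 0 there exist δ > 0 and γ > 0, depending only on C_inv and C_tr, with the following property. Let V be a real vector space; let A : V → V → ℝ be a symmetric positive semidefinite bilinear form; let j and q be seminorms on V; let m : V → V → ℝ be a bilinear form with m(v,v) = j(v)² for all v ∈ V; and let D : V → V be a linear map such that for every u ∈ V: (i) A(D u, D u) ≤ C_inv · A(u,u); (ii) j(D u)² ≤ C_tr · q(u)²; (iii) q(D u)² ≤ C_inv · q(u)²; and (iv) m(u, D u) ≥ q(u)² − √(2 C_tr) · q(u) · j(u). Then, writing B := m + A and N⁺(w) := √(j(w)² + A(w,w) + q(w)²), for every u ∈ V one has B(u, u + δ·D u) ≥ γ · N⁺(u) · N⁺(u + δ·D u). (Abstract form of Theorem 3.10, the second inf-sup stability estimate.) -/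
set_option maxHeartbeats 1600000 in
/-- Abstract form of Theorem 3.10 (second inf-sup stability estimate).
For all constants `C_inv, C_tr > 0` there exist `δ, γ > 0` depending only on
`C_inv, C_tr` such that: for every real vector space `V`, every symmetric
positive semidefinite bilinear form `A`, seminorms `j, q`, bilinear form `m`
with `m(v,v) = j(v)²`, and linear map `D : V → V` satisfying
(i) `A(Du, Du) ≤ C_inv A(u,u)`, (ii) `j(Du)² ≤ C_tr q(u)²`,
(iii) `q(Du)² ≤ C_inv q(u)²`, and
(iv) `m(u, Du) ≥ q(u)² − √(2 C_tr) q(u) j(u)` for all `u`,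
one has, with `B := m + A` and `N⁺(w) := √(j(w)² + A(w,w) + q(w)²)`,
`B(u, u + δ·Du) ≥ γ · N⁺(u) · N⁺(u + δ·Du)` for every `u`. -/
theorem stmt13 :
    ∀ Cinv Ctr : ℝ, 0 < Cinv → 0 < Ctr →
      ∃ δ : ℝ, 0 < δ ∧ ∃ γ : ℝ, 0 < γ ∧
        ∀ (V : Type) (_ : AddCommGroup V) (_ : Module ℝ V)
          (A m : LinearMap.BilinForm ℝ V) (j q : Seminorm ℝ V) (D : V →ₗ[ℝ] V),
          (∀ u v : V, A u v = A v u) →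
          (∀ v : V, 0 ≤ A v v) →
          (∀ v : V, m v v = (j v) ^ 2) →
          (∀ u : V, A (D u) (D u) ≤ Cinv * A u u) →
          (∀ u : V, (j (D u)) ^ 2 ≤ Ctr * (q u) ^ 2) →
          (∀ u : V, (q (D u)) ^ 2 ≤ Cinv * (q u) ^ 2) →
          (∀ u : V, (q u) ^ 2 - Real.sqrt (2 * Ctr) * q u * j u ≤ m u (D u)) →
          ∀ u : V,
            γ * Real.sqrt ((j u) ^ 2 + A u u + (q u) ^ 2) *
                Real.sqrt ((j (u + δ • D u)) ^ 2 + A (u + δ • D u) (u + δ • D u) +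
                  (q (u + δ • D u)) ^ 2) ≤
              m u (u + δ • D u) + A u (u + δ • D u) := by
  intro Cinv Ctr hCinv hCtr
  set s : ℝ := Real.sqrt Cinv with hs
  have hs0 : 0 < s := Real.sqrt_pos.mpr hCinv
  have hs2 : s ^ 2 = Cinv := Real.sq_sqrt hCinv.le
  set δ : ℝ := min (1 / (2 * Ctr)) (1 / (2 * s)) with hδdef
  have hδ : 0 < δ := lt_min (by positivity) (by positivity)
  have hδCtr : δ * Ctr ≤ 1 / 2 := by
    have h1 : δ ≤ 1 / (2 * Ctr) := min_le_left _ _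
    have := mul_le_mul_of_nonneg_right h1 hCtr.le
    calc δ * Ctr ≤ 1 / (2 * Ctr) * Ctr := this
      _ = 1 / 2 := by field_simp
  have hδs : δ * s ≤ 1 / 2 := by
    have h1 : δ ≤ 1 / (2 * s) := min_le_right _ _
    have := mul_le_mul_of_nonneg_right h1 hs0.le
    calc δ * s ≤ 1 / (2 * s) * s := this
      _ = 1 / 2 := by field_simp
  set c1 : ℝ := min (1 / 2) (δ / 2) with hc1def
  have hc1 : 0 < c1 := lt_min (by norm_num) (by positivity)
  have hc1half : c1 ≤ 1 / 2 := min_le_left _ _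
  have hc1δ : c1 ≤ δ / 2 := min_le_right _ _
  set K : ℝ := 2 + 2 * δ ^ 2 * Ctr + 2 * δ ^ 2 * Cinv + (1 + δ * s) ^ 2 with hKdef
  have hK : 0 < K := by positivity
  have hsK : 0 < Real.sqrt K := Real.sqrt_pos.mpr hK
  refine ⟨δ, hδ, c1 / Real.sqrt K, by positivity, ?_⟩
  intro V _ _ A m j q D hAsymm hApos hmjj hi hii hiii hiv u
  -- abbreviations
  have hju : (0:ℝ) ≤ j u := apply_nonneg j u
  have hqu : (0:ℝ) ≤ q u := apply_nonneg q u
  have hAu : (0:ℝ) ≤ A u u := hApos u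
  -- expansions of bilinear forms at u + δ • D u
  have hmexp : m u (u + δ • D u) = (j u) ^ 2 + δ * m u (D u) := by
    simp [map_add, map_smul, smul_eq_mul, hmjj u]
  have hAexp : A u (u + δ • D u) = A u u + δ * A u (D u) := by
    simp [map_add, map_smul, smul_eq_mul]
  have hAwexp : A (u + δ • D u) (u + δ • D u)
      = A u u + 2 * δ * A u (D u) + δ ^ 2 * A (D u) (D u) := by
    simp [map_add, map_smul, smul_eq_mul, hAsymm (D u) u]
    ring
  -- Cauchy-Schwarz-type bounds for A u (D u)
  have hlowA : -(s * A u u) ≤ A u (D u) := by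
    have h0 : 0 ≤ A (s • u + D u) (s • u + D u) := hApos _
    have hex : A (s • u + D u) (s • u + D u)
        = s ^ 2 * A u u + 2 * s * A u (D u) + A (D u) (D u) := by
      simp [map_add, map_smul, smul_eq_mul, hAsymm (D u) u]
      ring
    rw [hex] at h0
    have hDu := hi u
    nlinarith [hs0, hs2]
  have hupA : A u (D u) ≤ s * A u u := by
    have h0 : 0 ≤ A (s • u - D u) (s • u - D u) := hApos _
    have hex : A (s • u - D u) (s • u - D u)
        = s ^ 2 * A u u - 2 * s * A u (D u) + A (D u) (D u) := by
      simp [map_sub, map_smul, smul_eq_mul, hAsymm (D u) u]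
      ring
    rw [hex] at h0
    have hDu := hi u
    nlinarith [hs0, hs2]
  -- Young's inequality
  have hyoung : Real.sqrt (2 * Ctr) * q u * j u ≤ (q u) ^ 2 / 2 + Ctr * (j u) ^ 2 := by
    have h1 : Real.sqrt (2 * Ctr) ^ 2 = 2 * Ctr := Real.sq_sqrt (by positivity)
    nlinarith [sq_nonneg (q u - Real.sqrt (2 * Ctr) * j u), h1, hju, hqu, Real.sqrt_nonneg (2 * Ctr)]
  -- lower bound for B(u, u + δ Du)
  have hBlow : (1 / 2) * (j u) ^ 2 + (1 / 2) * A u u + (δ / 2) * (q u) ^ 2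
      ≤ m u (u + δ • D u) + A u (u + δ • D u) := by
    rw [hmexp, hAexp]
    have h1 : δ * ((q u) ^ 2 - Real.sqrt (2 * Ctr) * q u * j u) ≤ δ * m u (D u) :=
      mul_le_mul_of_nonneg_left (hiv u) hδ.le
    have h2 : δ * (Real.sqrt (2 * Ctr) * q u * j u) ≤ δ * ((q u) ^ 2 / 2 + Ctr * (j u) ^ 2) :=
      mul_le_mul_of_nonneg_left hyoung hδ.le
    have h3 : δ * (-(s * A u u)) ≤ δ * A u (D u) :=
      mul_le_mul_of_nonneg_left hlowA hδ.le
    have h4 : δ * Ctr * (j u) ^ 2 ≤ (1 / 2) * (j u) ^ 2 :=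
      mul_le_mul_of_nonneg_right hδCtr (sq_nonneg _)
    have h5 : δ * s * A u u ≤ (1 / 2) * A u u :=
      mul_le_mul_of_nonneg_right hδs hAu
    nlinarith
  -- upper bound for N⁺(u + δ Du)² by K * N⁺(u)²
  have hjw : j (u + δ • D u) ≤ j u + δ * j (D u) := by
    calc j (u + δ • D u) ≤ j u + j (δ • D u) := map_add_le_add j u _
      _ = j u + δ * j (D u) := by
          rw [map_smul_eq_mul]
          simp [Real.norm_eq_abs, abs_of_pos hδ]
  have hqw : q (u + δ • D u) ≤ q u + δ * q (D u) := by
    calc q (u + δ • D u) ≤ q u + q (δ • D u) := map_add_le_add q u _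
      _ = q u + δ * q (D u) := by
          rw [map_smul_eq_mul]
          simp [Real.norm_eq_abs, abs_of_pos hδ]
  have hjw2 : (j (u + δ • D u)) ^ 2 ≤ 2 * (j u) ^ 2 + 2 * δ ^ 2 * Ctr * (q u) ^ 2 := by
    have h0 : (0:ℝ) ≤ j (u + δ • D u) := apply_nonneg j _
    have h1 : (0:ℝ) ≤ j u + δ * j (D u) := by positivity
    have h2 : (j (u + δ • D u)) ^ 2 ≤ (j u + δ * j (D u)) ^ 2 := by
      exact pow_le_pow_left₀ h0 hjw 2
    have h3 := hii u
    nlinarith [sq_nonneg (j u - δ * j (D u)), sq_nonneg δ]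
  have hqw2 : (q (u + δ • D u)) ^ 2 ≤ 2 * (q u) ^ 2 + 2 * δ ^ 2 * Cinv * (q u) ^ 2 := by
    have h0 : (0:ℝ) ≤ q (u + δ • D u) := apply_nonneg q _
    have h2 : (q (u + δ • D u)) ^ 2 ≤ (q u + δ * q (D u)) ^ 2 := by
      exact pow_le_pow_left₀ h0 hqw 2
    have h3 := hiii u
    nlinarith [sq_nonneg (q u - δ * q (D u)), sq_nonneg δ]
  have hAw2 : A (u + δ • D u) (u + δ • D u) ≤ (1 + δ * s) ^ 2 * A u u := by
    rw [hAwexp]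
    have hDu := hi u
    have key : (1 + δ * s) ^ 2 * A u u
        = A u u + 2 * δ * (s * A u u) + δ ^ 2 * (Cinv * A u u) := by
      rw [← hs2]; ring
    rw [key]
    have h1 : 2 * δ * A u (D u) ≤ 2 * δ * (s * A u u) :=
      mul_le_mul_of_nonneg_left hupA (by positivity)
    have h2 : δ ^ 2 * A (D u) (D u) ≤ δ ^ 2 * (Cinv * A u u) :=
      mul_le_mul_of_nonneg_left hDu (sq_nonneg δ)
    linarith
  set X2 : ℝ := (j u) ^ 2 + A u u + (q u) ^ 2 with hX2def
  set Y2 : ℝ := (j (u + δ • D u)) ^ 2 + A (u + δ • D u) (u + δ • D u)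
      + (q (u + δ • D u)) ^ 2 with hY2def
  have hX2 : 0 ≤ X2 := by positivity
  have hYK : Y2 ≤ K * X2 := by
    rw [hY2def, hX2def, hKdef]
    have t1 : 0 ≤ (2 * δ ^ 2 * Ctr + 2 * δ ^ 2 * Cinv + (1 + δ * s) ^ 2) * (j u) ^ 2 := by
      positivity
    have t2 : 0 ≤ (2 + 2 * δ ^ 2 * Ctr + 2 * δ ^ 2 * Cinv) * A u u := by positivity
    have t3 : 0 ≤ (1 + δ * s) ^ 2 * (q u) ^ 2 := by positivity
    nlinarith [hjw2, hqw2, hAw2, t1, t2, t3]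
  -- conclusion
  have hstep1 : Real.sqrt Y2 ≤ Real.sqrt K * Real.sqrt X2 := by
    rw [← Real.sqrt_mul hK.le]
    exact Real.sqrt_le_sqrt hYK
  have hfin : c1 / Real.sqrt K * Real.sqrt X2 * Real.sqrt Y2 ≤ c1 * X2 := by
    calc c1 / Real.sqrt K * Real.sqrt X2 * Real.sqrt Y2
        ≤ c1 / Real.sqrt K * Real.sqrt X2 * (Real.sqrt K * Real.sqrt X2) := by
          exact mul_le_mul_of_nonneg_left hstep1 (by positivity)
      _ = c1 / Real.sqrt K * Real.sqrt K * (Real.sqrt X2 * Real.sqrt X2) := by ring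
      _ = c1 * X2 := by
          rw [div_mul_cancel₀ _ (ne_of_gt hsK), Real.mul_self_sqrt hX2]
  calc c1 / Real.sqrt K * Real.sqrt X2 * Real.sqrt Y2 ≤ c1 * X2 := hfin
    _ ≤ (1 / 2) * (j u) ^ 2 + (1 / 2) * A u u + (δ / 2) * (q u) ^ 2 := by
        rw [hX2def]
        nlinarith [mul_le_mul_of_nonneg_right hc1half (sq_nonneg (j u)),
          mul_le_mul_of_nonneg_right hc1half hAu,
          mul_le_mul_of_nonneg_right hc1δ (sq_nonneg (q u))]
    _ ≤ m u (u + δ • D u) + A u (u + δ • D u) := hBlow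
end
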